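/- arXiv:2005.03497 — 11 statements merged into one kernel-verified Lean document; each statement's English description precedes it below -/
import Mathlib

section
/- Let α ∈ K. Then α is a normal element of K/F (i.e., the family (g(α))_{g ∈ G} is a basis of K as an F-vector space) if and only if the matrix M ∈ Matrix G G K with entries M(g,h) = (g·h)(α) (the Galois automorphism g·h applied to α) is invertible. -/
/-!
Write `M_b` for the matrix `(σ (b τ))_{σ, τ}` attached to a family `b` of `K` indexed by the
Galois group. Since the trace of `K/F` is the sum of the Galois conjugates, the trace matrix
`(Tr(b σ * b τ))` of `b` is `M_bᵀ * M_b`, so the discriminant of `b` maps to `(det M_b)²` in `K`.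
In the separable extension `K/F`, a family of `[K : F]` elements has nonzero discriminant exactly
when it is linearly independent, i.e. a basis. For the orbit `b τ = τ α`, `M_b` is the matrix of
the theorem.
-/

open Matrix Module

theorem exists_basis_apply_eq_iff_linearIndependent {K V ι : Type*} [DivisionRing K]
    [AddCommGroup V] [Module K V] [FiniteDimensional K V] [Fintype ι] {v : ι → V}
    (hcard : Fintype.card ι = finrank K V) :
    (∃ b : Basis ι K V, ∀ i, b i = v i) ↔ LinearIndependent K v := by
  constructor
  · rintro ⟨b, hb⟩
    simpa only [← funext hb] using b.linearIndependent
  · intro hv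
    exact ⟨basisOfLinearIndependentOfCardEqFinrank' v hv hcard, fun i => by simp⟩

theorem Algebra.discr_ne_zero_iff_linearIndependent {F K ι : Type*} [Field F] [Field K]
    [Algebra F K] [FiniteDimensional F K] [Algebra.IsSeparable F K] [Fintype ι] [DecidableEq ι]
    {b : ι → K} (hcard : Fintype.card ι = finrank F K) :
    discr F b ≠ 0 ↔ LinearIndependent F b := by
  refine ⟨not_imp_comm.1 (discr_zero_of_not_linearIndependent F), fun hb => ?_⟩
  simpa using discr_not_zero_of_basis F (basisOfLinearIndependentOfCardEqFinrank' b hb hcard)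

section Galois

variable {F K ι : Type*} [Field F] [Field K] [Algebra F K] [FiniteDimensional F K] [IsGalois F K]
  [Fintype Gal(K/F)]

theorem IsGalois.fintype_card_aut_eq_finrank : Fintype.card Gal(K/F) = finrank F K := by
  rw [← Nat.card_eq_fintype_card, IsGalois.card_aut_eq_finrank]

theorem Algebra.traceMatrix_map_algebraMap_eq_transpose_mul (b : ι → K) :
    (traceMatrix F b).map (algebraMap F K) =
      (of fun (σ : Gal(K/F)) i => σ (b i))ᵀ * of fun (σ : Gal(K/F)) i => σ (b i) := by
  ext i j
  simp only [map_apply, traceMatrix_apply, traceForm_apply, trace_eq_sum_automorphisms,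
    mul_apply, transpose_apply, of_apply, map_mul]
  -- `trace_eq_sum_automorphisms` sums over Mathlib's `Fintype` instance on `Gal(K/F)`
  convert rfl

variable [DecidableEq Gal(K/F)]

theorem Algebra.algebraMap_discr_eq_det_sq (b : Gal(K/F) → K) :
    algebraMap F K (discr F b) = (of fun (σ τ : Gal(K/F)) => σ (b τ)).det ^ 2 := by
  rw [discr_def, RingHom.map_det, RingHom.mapMatrix_apply,
    traceMatrix_map_algebraMap_eq_transpose_mul, det_mul, det_transpose, sq]

theorem linearIndependent_iff_det_algEquiv_apply_ne_zero (b : Gal(K/F) → K) :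
    LinearIndependent F b ↔ (of fun (σ τ : Gal(K/F)) => σ (b τ)).det ≠ 0 := by
  rw [← Algebra.discr_ne_zero_iff_linearIndependent IsGalois.fintype_card_aut_eq_finrank,
    ← map_ne_zero_iff _ (algebraMap F K).injective, Algebra.algebraMap_discr_eq_det_sq,
    pow_ne_zero_iff two_ne_zero]

end Galois

theorem orbit_basis_iff_matrix_isUnit_general
    (F K : Type*) [Field F] [Field K] [Algebra F K]
    [FiniteDimensional F K] [IsGalois F K]
    [Fintype (K ≃ₐ[F] K)] [DecidableEq (K ≃ₐ[F] K)] (α : K) :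
    (∃ b : Module.Basis (K ≃ₐ[F] K) F K, ∀ g : K ≃ₐ[F] K, b g = g α) ↔
      IsUnit (Matrix.of fun g h : K ≃ₐ[F] K => (g * h) α) := by
  rw [exists_basis_apply_eq_iff_linearIndependent IsGalois.fintype_card_aut_eq_finrank,
    linearIndependent_iff_det_algEquiv_apply_ne_zero, isUnit_iff_isUnit_det, isUnit_iff_ne_zero]
  rfl

/-- α ∈ K is a normal element of the finite Galois extension K/F
(i.e. the family (g α)_{g ∈ G} is an F-basis of K) iff the matrix
M(g,h) = (g·h)(α) over K is invertible. -/
theorem orbit_basis_iff_matrix_isUnit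
    (F K : Type*) [Field F] [Field K] [CharZero F] [Algebra F K]
    [FiniteDimensional F K] [IsGalois F K]
    [Fintype (K ≃ₐ[F] K)] [DecidableEq (K ≃ₐ[F] K)] (α : K) :
    (∃ b : Module.Basis (K ≃ₐ[F] K) F K, ∀ g : K ≃ₐ[F] K, b g = g α) ↔
      IsUnit (Matrix.of fun g h : K ≃ₐ[F] K => (g * h) α) :=
  orbit_basis_iff_matrix_isUnit_general F K α
end

section
/- Let α ∈ K and let M ∈ Matrix G G K be the matrix with entries M(g,h) = (g·h)(α). If M is not invertible, then there exists a nonzero vector u : G → F with entries in the base field F such that M · u = 0, i.e., M.mulVec (algebraMap F K ∘ u) = 0. -/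
/-- if the matrix M(g,h) = (g·h)(α) over K is not invertible,
then it has a nonzero kernel vector with entries in the base field F. -/
theorem exists_kernel_vector_in_base_field
    (F K : Type*) [Field F] [Field K] [CharZero F] [Algebra F K]
    [FiniteDimensional F K] [IsGalois F K]
    [Fintype (K ≃ₐ[F] K)] [DecidableEq (K ≃ₐ[F] K)] (α : K)
    (hM : ¬ IsUnit (Matrix.of fun g h : K ≃ₐ[F] K => (g * h) α)) :
    ∃ u : (K ≃ₐ[F] K) → F, u ≠ 0 ∧
      (Matrix.of fun g h : K ≃ₐ[F] K => (g * h) α).mulVec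
        (fun g => algebraMap F K (u g)) = 0 := by
  classical
  set M : Matrix (K ≃ₐ[F] K) (K ≃ₐ[F] K) K :=
    Matrix.of fun g h : K ≃ₐ[F] K => (g * h) α with hMdef
  -- det = 0
  have hdet : M.det = 0 := by
    by_contra h
    exact hM ((Matrix.isUnit_iff_isUnit_det M).mpr (isUnit_iff_ne_zero.mpr h))
  obtain ⟨v, hv0, hv⟩ := (Matrix.exists_mulVec_eq_zero_iff).mpr hdet
  -- semilinear stability
  have stab : ∀ (σ : K ≃ₐ[F] K) (w : (K ≃ₐ[F] K) → K), M.mulVec w = 0 →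
      M.mulVec (fun h => σ (w h)) = 0 := by
    intro σ w hw
    funext g
    have h1 := congrArg σ (congrFun hw (σ⁻¹ * g))
    simp only [Matrix.mulVec, dotProduct, Pi.zero_apply, map_sum, map_mul,
      map_zero, hMdef, Matrix.of_apply] at h1 ⊢
    convert h1 using 2 with h
    have : σ ((σ⁻¹ * g * h) α) = (σ * (σ⁻¹ * g * h)) α := rfl
    rw [this, ← mul_assoc, ← mul_assoc, mul_inv_cancel, one_mul]
  -- minimal support
  let supp : ((K ≃ₐ[F] K) → K) → Finset (K ≃ₐ[F] K) :=
    fun w => Finset.univ.filter (fun h => w h ≠ 0)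
  have hex : ∃ n, ∃ w : (K ≃ₐ[F] K) → K, w ≠ 0 ∧ M.mulVec w = 0 ∧ (supp w).card = n :=
    ⟨(supp v).card, v, hv0, hv, rfl⟩
  obtain ⟨u, hu0, huk, hucard⟩ := Nat.find_spec hex
  -- normalize
  have : ∃ h0, u h0 ≠ 0 := by
    by_contra h
    push_neg at h
    exact hu0 (funext fun x => h x)
  obtain ⟨h0, hh0⟩ := this
  set u1 : (K ≃ₐ[F] K) → K := fun h => (u h0)⁻¹ * u h with hu1def
  have hu1k : M.mulVec u1 = 0 := by
    have : u1 = (u h0)⁻¹ • u := rfl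
    rw [this, Matrix.mulVec_smul, huk, smul_zero]
  have hu1h0 : u1 h0 = 1 := inv_mul_cancel₀ hh0
  have hsupp1 : supp u1 = supp u := by
    ext h
    simp only [supp, Finset.mem_filter, Finset.mem_univ, true_and, hu1def]
    constructor
    · intro h1 h2; exact h1 (by rw [h2, mul_zero])
    · intro h1; exact mul_ne_zero (inv_ne_zero hh0) h1
  -- fixedness
  have hfix : ∀ (σ : K ≃ₐ[F] K) (h : K ≃ₐ[F] K), σ (u1 h) = u1 h := by
    intro σ h
    set w : (K ≃ₐ[F] K) → K := (fun h => σ (u1 h)) - u1 with hwdef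
    have hwk : M.mulVec w = 0 := by
      rw [hwdef, Matrix.mulVec_sub, stab σ u1 hu1k, hu1k, sub_zero]
    have hwzero : w = 0 := by
      by_contra hwne
      have hwsub : supp w ⊆ supp u1 := by
        intro x hx
        simp only [supp, Finset.mem_filter, Finset.mem_univ, true_and, hwdef,
          Pi.sub_apply] at hx ⊢
        intro hz
        exact hx (by rw [hz, map_zero, sub_zero])
      have hwh0 : h0 ∉ supp w := by
        simp only [supp, Finset.mem_filter, Finset.mem_univ, true_and, hwdef,
          Pi.sub_apply, hu1h0, map_one, sub_self, ne_eq, not_not]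
      have hlt : (supp w).card < Nat.find hex := by
        rw [← hucard, ← hsupp1]
        exact Finset.card_lt_card (Finset.ssubset_iff_of_subset hwsub |>.mpr
          ⟨h0, by
            simp only [supp, Finset.mem_filter, Finset.mem_univ, true_and, hu1h0]
            exact one_ne_zero, hwh0⟩)
      exact Nat.find_min hex hlt ⟨w, hwne, hwk, rfl⟩
    have := congrFun hwzero h
    simpa [hwdef, sub_eq_zero] using this
  -- descend to F
  have hmem : ∀ h : K ≃ₐ[F] K, u1 h ∈ (⊥ : IntermediateField F K) := by
    intro h
    have hbot : IntermediateField.fixedField (⊤ : Subgroup (K ≃ₐ[F] K)) = ⊥ :=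
      ((IsGalois.tfae (F := F) (E := K)).out 0 1).mp ‹IsGalois F K›
    rw [← hbot]
    exact fun σ => hfix σ.1 h
  choose uf huf using fun h => IntermediateField.mem_bot.mp (hmem h)
  refine ⟨uf, ?_, ?_⟩
  · intro h
    have h1 : (1 : K) = 0 := by
      rw [← hu1h0, ← huf h0, congrFun h h0]
      simp
    exact one_ne_zero h1
  · have : (fun g => algebraMap F K (uf g)) = u1 := funext huf
    rw [this]
    exact hu1k
end

section
/- Let F be an infinite field, K/F a finite field extension, ι a finite index type, and M ∈ Matrix ι ι K an invertible matrix. Then there exists an F-linear form ℓ : K → F such that the matrix ℓ(M) ∈ Matrix ι ι F, obtained by applying ℓ to each entry of M, is invertible. -/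
/-!
Fix a basis `b` of `K` over `F`. The linear forms on `K` are the `∑ k, c k • b.coord k`, so
`c ↦ det (M.map ℓ_c)` is the evaluation of one polynomial in the coordinates `c`: the
determinant of the matrix of "generic forms" `∑ k, (b.repr · k) X k`. Evaluating that
polynomial at `X k = b k` instead returns `det M ≠ 0`, so it is a nonzero polynomial, and over
an infinite field it has a point where it does not vanish.
-/

open MvPolynomial

namespace Module.Basis

variable {κ R A : Type*} [Fintype κ] [CommRing R] [CommRing A] [Algebra R A]

noncomputable def genericForm (b : Basis κ R A) (a : A) : MvPolynomial κ R :=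
  ∑ k, C (b.repr a k) * X k

theorem aeval_genericForm (b : Basis κ R A) (a : A) : aeval b (b.genericForm a) = a := by
  simpa [genericForm, Algebra.smul_def] using b.sum_repr a

theorem eval_genericForm (b : Basis κ R A) (c : κ → R) (a : A) :
    eval c (b.genericForm a) = (∑ k, c k • b.coord k) a := by
  simp [genericForm, mul_comm]

variable {ι : Type*} [Fintype ι] [DecidableEq ι]

theorem aeval_det_map_genericForm (b : Basis κ R A) (M : Matrix ι ι A) :
    aeval b (M.map b.genericForm).det = M.det := by
  rw [AlgHom.map_det]
  congr 1
  ext i j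
  exact b.aeval_genericForm (M i j)

theorem eval_det_map_genericForm (b : Basis κ R A) (c : κ → R) (M : Matrix ι ι A) :
    eval c (M.map b.genericForm).det = (M.map ⇑(∑ k, c k • b.coord k)).det := by
  rw [RingHom.map_det]
  congr 1
  ext i j
  exact b.eval_genericForm c (M i j)

end Module.Basis

/-- for an invertible matrix M over a finite extension K of an
infinite field F, some F-linear form ℓ : K → F applied entrywise keeps M
invertible. -/
theorem exists_linearForm_map_isUnit
    (F K : Type*) [Field F] [Field K] [Algebra F K] [Infinite F]
    [FiniteDimensional F K]
    (ι : Type*) [Fintype ι] [DecidableEq ι]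
    (M : Matrix ι ι K) (hM : IsUnit M) :
    ∃ ℓ : K →ₗ[F] F, IsUnit (M.map ℓ) := by
  let b := Module.finBasis F K
  have hdet : (M.map b.genericForm).det ≠ 0 := by
    intro h
    have := b.aeval_det_map_genericForm M
    rw [h, map_zero] at this
    exact (M.isUnit_iff_isUnit_det.mp hM).ne_zero this.symm
  obtain ⟨c, hc⟩ : ∃ c, eval c (M.map b.genericForm).det ≠ 0 := by
    simpa using mt MvPolynomial.funext hdet
  refine ⟨∑ k, c k • b.coord k, Matrix.isUnit_iff_isUnit_det _ |>.mpr ?_⟩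
  rw [← b.eval_det_map_genericForm]
  exact hc.isUnit
end

section
/- Let α ∈ K. For an F-linear form ℓ : K → F, set s_{α,ℓ} := Σ_{g ∈ G} ℓ(g(α))·g ∈ F[G]. Then α is a normal element of K/F if and only if there exists an F-linear form ℓ : K → F such that s_{α,ℓ} is a unit in the group algebra F[G]. -/
/-!
If the conjugates `g α` form a basis, the coordinate form at `1` makes `s_{α,ℓ}` equal to `1`.
Conversely, for every `c : G → F` one has
`s_{α,ℓ} · Σ_h c_h h⁻¹ = Σ_k ℓ(k(Σ_h c_h h(α))) k`,
so a linear relation `Σ_h c_h h(α) = 0` gives an element `Σ_h c_h h⁻¹` annihilated by the unit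
`s_{α,ℓ}`, whence `c = 0`. Since `|G| = [K : F]`, the independent conjugates are a basis.
-/

open MonoidAlgebra

section

variable {R M G : Type*} [Group G] [Fintype G]

variable (G) in
noncomputable def projectedOrbitSum [CommSemiring R] [AddCommMonoid M] [Module R M]
    [DistribMulAction G M] (ℓ : M →ₗ[R] R) (v : M) : MonoidAlgebra R G :=
  ∑ g : G, single g (ℓ (g • v))

theorem coeff_sum_single_inv [Semiring R] (c : G → R) (g : G) :
    (∑ h : G, single h⁻¹ (c h)).coeff g⁻¹ = c g := by
  classical
  simp [coeff_sum, Finsupp.finsetSum_apply, Finsupp.single_apply]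

theorem projectedOrbitSum_mul_sum_single_inv [CommSemiring R] [AddCommMonoid M] [Module R M]
    [DistribMulAction G M] [SMulCommClass G R M] (ℓ : M →ₗ[R] R) (v : M) (c : G → R) :
    projectedOrbitSum G ℓ v * ∑ h : G, single h⁻¹ (c h) =
      ∑ k : G, single k (ℓ (k • ∑ h : G, c h • h • v)) := by
  have hrow (h : G) : ∑ g : G, single g (ℓ (g • v)) * single h⁻¹ (c h) =
      ∑ k : G, single k (c h * ℓ (k • h • v)) :=
    Fintype.sum_equiv (Equiv.mulRight h⁻¹) _ _ fun g => by
      simp [single_mul_single, mul_smul, mul_comm]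
  rw [projectedOrbitSum, Finset.sum_mul_sum, Finset.sum_comm]
  simp only [hrow]
  rw [Finset.sum_comm]
  refine Fintype.sum_congr _ _ fun k => ?_
  simp only [Finset.smul_sum, map_sum, smul_comm k (c _), map_smul, smul_eq_mul]
  exact (map_sum (singleAddHom k) _ _).symm

theorem linearIndependent_smul_of_isUnit_projectedOrbitSum [CommRing R] [AddCommGroup M]
    [Module R M] [DistribMulAction G M] [SMulCommClass G R M] {ℓ : M →ₗ[R] R} {v : M}
    (hs : IsUnit (projectedOrbitSum G ℓ v)) : LinearIndependent R (fun g : G => g • v) := by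
  rw [Fintype.linearIndependent_iff]
  intro c hc g
  have hzero : ∑ h : G, single h⁻¹ (c h) = 0 := by
    rw [← hs.mul_right_eq_zero, projectedOrbitSum_mul_sum_single_inv, hc]
    simp
  rw [← coeff_sum_single_inv c g, hzero, coeff_zero, Finsupp.zero_apply]

theorem projectedOrbitSum_coord_one [CommSemiring R] [AddCommMonoid M] [Module R M]
    [DistribMulAction G M] {v : M} (b : Module.Basis G R M) (hb : ∀ g, b g = g • v) :
    projectedOrbitSum G (b.coord 1) v = 1 := by
  classical
  have hcoord (g : G) : b.coord 1 (g • v) = if g = 1 then 1 else 0 := by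
    simp [← hb, Finsupp.single_apply]
  rw [projectedOrbitSum, Fintype.sum_eq_single 1 fun g hg => by simp [hcoord, hg], hcoord,
    if_pos rfl, one_def]

theorem exists_basis_smul_iff_exists_isUnit_projectedOrbitSum [Field R] [AddCommGroup M]
    [Module R M] [DistribMulAction G M] [SMulCommClass G R M]
    (hcard : Fintype.card G = Module.finrank R M) (v : M) :
    (∃ b : Module.Basis G R M, ∀ g, b g = g • v) ↔
      ∃ ℓ : M →ₗ[R] R, IsUnit (projectedOrbitSum G ℓ v) := by
  constructor
  · rintro ⟨b, hb⟩
    exact ⟨b.coord 1, projectedOrbitSum_coord_one b hb ▸ isUnit_one⟩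
  · rintro ⟨ℓ, hs⟩
    let b := basisOfLinearIndependentOfCardEqFinrank
      (linearIndependent_smul_of_isUnit_projectedOrbitSum hs) hcard
    exact ⟨b, fun g => by simp [b]⟩

end

theorem normal_iff_exists_projected_orbitSum_isUnit_general
    (F K : Type*) [Field F] [Field K] [Algebra F K]
    [FiniteDimensional F K] [IsGalois F K]
    [Fintype (K ≃ₐ[F] K)] (α : K) :
    (∃ b : Module.Basis (K ≃ₐ[F] K) F K, ∀ g : K ≃ₐ[F] K, b g = g α) ↔
      ∃ ℓ : K →ₗ[F] F,
        IsUnit (∑ g : K ≃ₐ[F] K, MonoidAlgebra.single g (ℓ (g α))) :=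
  exists_basis_smul_iff_exists_isUnit_projectedOrbitSum
    (Nat.card_eq_fintype_card.symm.trans (IsGalois.card_aut_eq_finrank F K)) α

/-- α is normal iff for some F-linear form ℓ : K → F the
projected orbit sum s_{α,ℓ} = Σ_{g ∈ G} ℓ(g(α))·g is a unit in F[G]. -/
theorem normal_iff_exists_projected_orbitSum_isUnit
    (F K : Type*) [Field F] [Field K] [CharZero F] [Algebra F K]
    [FiniteDimensional F K] [IsGalois F K]
    [Fintype (K ≃ₐ[F] K)] (α : K) :
    (∃ b : Module.Basis (K ≃ₐ[F] K) F K, ∀ g : K ≃ₐ[F] K, b g = g α) ↔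
      ∃ ℓ : K →ₗ[F] F,
        IsUnit (∑ g : K ≃ₐ[F] K, MonoidAlgebra.single g (ℓ (g α))) :=
  normal_iff_exists_projected_orbitSum_isUnit_general F K α
end

section
/- Let b_0, …, b_{n-1} be an F-basis of K. Then there exists a nonzero homogeneous polynomial D in n variables over F of total degree n such that for every tuple a = (a_0, …, a_{n-1}) ∈ F^n, the element α = Σ_k a_k·b_k is a normal element of K/F if and only if D(a) ≠ 0. -/
/-!
Enumerate the Galois group as `σ₁, …, σₙ`. The coordinates of `σᵢ (∑ aₖ bₖ)` in the basis `b`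
are linear forms in `a`, so their determinant is a homogeneous polynomial `D` of degree `n`, and
`D(a) ≠ 0` exactly when the conjugates of `∑ aₖ bₖ` form a basis. By the normal basis theorem
some `a` has this property, hence `D ≠ 0`.
-/

open MvPolynomial

namespace MvPolynomial

variable {R σ : Type*} [CommRing R] [Fintype σ] [DecidableEq σ]

noncomputable def ofLinearForm (ℓ : (σ → R) →ₗ[R] R) : MvPolynomial σ R :=
  ∑ k, C (ℓ (Pi.single k 1)) * X k

theorem isHomogeneous_ofLinearForm (ℓ : (σ → R) →ₗ[R] R) : (ofLinearForm ℓ).IsHomogeneous 1 :=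
  IsHomogeneous.sum _ _ _ fun k _ => by
    simpa using (isHomogeneous_C σ (ℓ (Pi.single k 1))).mul (isHomogeneous_X R k)

theorem eval_ofLinearForm (ℓ : (σ → R) →ₗ[R] R) (a : σ → R) : eval a (ofLinearForm ℓ) = ℓ a := by
  conv_rhs => rw [← Finset.univ_sum_single a]
  simp only [ofLinearForm, map_sum, map_mul, eval_C, eval_X]
  refine Finset.sum_congr rfl fun k _ => ?_
  rw [mul_comm, ← smul_eq_mul, ← map_smul, ← Pi.single_smul', smul_eq_mul, mul_one]

end MvPolynomial

theorem Matrix.isHomogeneous_det {R σ ι : Type*} [CommRing R] [Fintype ι] [DecidableEq ι]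
    {M : Matrix ι ι (MvPolynomial σ R)} {m : ℕ} (hM : ∀ i j, (M i j).IsHomogeneous m) :
    M.det.IsHomogeneous (Fintype.card ι * m) := by
  rw [det_apply]
  refine IsHomogeneous.sum _ _ _ fun τ _ => ?_
  have := IsHomogeneous.prod Finset.univ (fun i => M (τ i) i) (fun _ => m) fun i _ => hM _ _
  simp only [Finset.sum_const, Finset.card_univ, smul_eq_mul] at this
  exact (homogeneousSubmodule σ R _).toAddSubgroup.zsmul_mem this _

theorem Module.Basis.exists_isHomogeneous_eval_eq_det {R M σ ι : Type*} [CommRing R]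
    [AddCommGroup M] [Module R M] [Fintype σ] [DecidableEq σ] [Fintype ι] [DecidableEq ι]
    (b : Basis ι R M) (f : ι → (σ → R) →ₗ[R] M) :
    ∃ D : MvPolynomial σ R, D.IsHomogeneous (Fintype.card ι) ∧
      ∀ a, eval a D = b.det fun i => f i a := by
  let P : Matrix ι ι (MvPolynomial σ R) := .of fun i j => ofLinearForm (b.coord j ∘ₗ f i)
  refine ⟨P.det, mul_one (Fintype.card ι) ▸ Matrix.isHomogeneous_det fun i j =>
    isHomogeneous_ofLinearForm _, fun a => ?_⟩
  rw [RingHom.map_det, b.det_apply, ← Matrix.det_transpose]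
  congr 1
  ext i j
  simp [P, eval_ofLinearForm, Basis.toMatrix_apply]

theorem Module.Basis.exists_basis_coe_eq_iff_det_ne_zero {K V ι κ : Type*} [Field K]
    [AddCommGroup V] [Module K V] [Fintype ι] [DecidableEq ι] (b : Basis ι K V) (e : κ ≃ ι)
    (v : κ → V) :
    (∃ c : Basis κ K V, ⇑c = v) ↔ b.det (v ∘ e.symm) ≠ 0 := by
  rw [← isUnit_iff_ne_zero, ← b.is_basis_iff_det, linearIndependent_equiv,
    e.symm.surjective.range_comp]
  constructor
  · rintro ⟨c, rfl⟩
    exact ⟨c.linearIndependent, c.span_eq⟩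
  · rintro ⟨hli, hspan⟩
    exact ⟨Basis.mk hli hspan.ge, Basis.coe_mk _ _⟩

theorem exists_homogeneous_poly_detecting_normal_general
    (F K : Type*) [Field F] [Field K] [Algebra F K] [IsGalois F K]
    (n : ℕ) (b : Module.Basis (Fin n) F K) :
    ∃ D : MvPolynomial (Fin n) F, D ≠ 0 ∧ D.IsHomogeneous n ∧
      ∀ a : Fin n → F,
        (∃ bb : Module.Basis (K ≃ₐ[F] K) F K,
            ∀ g : K ≃ₐ[F] K, bb g = g (∑ k, a k • b k)) ↔
          MvPolynomial.eval a D ≠ 0 := by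
  have : FiniteDimensional F K := Module.Finite.of_basis b
  have hcard : Fintype.card (K ≃ₐ[F] K) = n := by
    rw [← Nat.card_eq_fintype_card, IsGalois.card_aut_eq_finrank, Module.finrank_eq_card_basis b,
      Fintype.card_fin]
  let e : (K ≃ₐ[F] K) ≃ Fin n := Fintype.equivFinOfCardEq hcard
  obtain ⟨D, hD, hD_eval⟩ := b.exists_isHomogeneous_eval_eq_det
    fun i => (e.symm i).toLinearMap ∘ₗ b.equivFun.symm.toLinearMap
  have h_normal (a : Fin n → F) :
      (∃ bb : Module.Basis (K ≃ₐ[F] K) F K, ∀ g : K ≃ₐ[F] K, bb g = g (∑ k, a k • b k)) ↔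
        eval a D ≠ 0 := by
    simp_rw [← funext_iff, b.exists_basis_coe_eq_iff_det_ne_zero e, hD_eval]
    simp [Function.comp_def, b.equivFun_symm_apply]
  refine ⟨D, ?_, by simpa using hD, h_normal⟩
  rintro rfl
  exact (h_normal (b.equivFun (IsGalois.normalBasis F K 1))).mp
    ⟨IsGalois.normalBasis F K, fun g => by
      rw [← b.equivFun_symm_apply, LinearEquiv.symm_apply_apply, IsGalois.normalBasis_apply]⟩
    (map_zero _)

/-- there is a nonzero homogeneous polynomial D of degree n in
n variables such that Σ_k a_k·b_k is a normal element of K/F iff D(a) ≠ 0. -/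
theorem exists_homogeneous_poly_detecting_normal
    (F K : Type*) [Field F] [Field K] [CharZero F] [Algebra F K]
    [FiniteDimensional F K] [IsGalois F K]
    (n : ℕ) (b : Module.Basis (Fin n) F K) :
    ∃ D : MvPolynomial (Fin n) F, D ≠ 0 ∧ D.IsHomogeneous n ∧
      ∀ a : Fin n → F,
        (∃ bb : Module.Basis (K ≃ₐ[F] K) F K,
            ∀ g : K ≃ₐ[F] K, bb g = g (∑ k, a k • b k)) ↔
          MvPolynomial.eval a D ≠ 0 :=
  exists_homogeneous_poly_detecting_normal_general F K n b
end

section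
/- Let b_0, …, b_{n-1} be an F-basis of K and X a finite nonempty subset of F. Then the number of tuples (a_0, …, a_{n-1}) ∈ X^n such that Σ_k a_k·b_k is NOT a normal element of K/F is at most n·|X|^{n-1}. -/
/-!
An element `α` is normal iff the matrix `(σ (τ α))_{σ,τ}` is invertible: invertibility makes the
orbit linearly independent over `F`, and if the orbit is a basis `B`, Dedekind's independence of
characters makes the rows of `(σ (B τ))` linearly independent over `K`. For `α = ∑ a_k b_k` this
determinant is the value at `a` of a polynomial of total degree at most `n` over `K`, which is
nonzero because some element is normal (normal basis theorem). Schwartz–Zippel bounds its zeros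
in `Xⁿ` by `n·|X|^(n-1)`.
-/

open Finset MvPolynomial

theorem MvPolynomial.totalDegree_det_le {ι σ R : Type*} [Fintype ι] [DecidableEq ι] [CommRing R]
    {M : Matrix ι ι (MvPolynomial σ R)} {d : ℕ} (hM : ∀ i j, (M i j).totalDegree ≤ d) :
    M.det.totalDegree ≤ Fintype.card ι * d := by
  rw [Matrix.det_apply]
  refine (totalDegree_finsetSum _ _).trans (Finset.sup_le fun π _ => ?_)
  refine (totalDegree_smul_le _ _).trans ((totalDegree_finsetProd _ _).trans ?_)
  exact (Finset.sum_le_sum fun i _ => hM (π i) i).trans (by simp)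

theorem MvPolynomial.card_filter_eval_eq_zero_le {R : Type*} [CommRing R] [IsDomain R]
    [DecidableEq R] {n : ℕ} {p : MvPolynomial (Fin n) R} (hp : p ≠ 0) {S : Finset R}
    (hS : S.Nonempty) :
    #{x ∈ Fintype.piFinset fun _ ↦ S | eval x p = 0} ≤ p.totalDegree * #S ^ (n - 1) := by
  have hpos : 0 < #S := hS.card_pos
  have hSZ := schwartz_zippel_totalDegree hp S
  rw [div_le_div_iff₀ (by positivity) (by exact_mod_cast hpos)] at hSZ
  have key : #{x ∈ Fintype.piFinset fun _ ↦ S | eval x p = 0} * #S ≤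
      p.totalDegree * #S ^ n := by
    exact_mod_cast hSZ
  rcases n with _ | n
  · simpa using (Nat.le_mul_of_pos_right _ hpos).trans key
  · rw [pow_succ, ← mul_assoc] at key
    exact Nat.le_of_mul_le_mul_right key hpos

theorem MvPolynomial.card_filter_eval_comp_eq_zero_le {R S : Type*} [CommRing R] [CommRing S]
    [IsDomain S] [DecidableEq S] {f : R →+* S} (hf : Function.Injective f) {n : ℕ}
    {p : MvPolynomial (Fin n) S} (hp : p ≠ 0) {X : Finset R} (hX : X.Nonempty) :
    #{a ∈ Fintype.piFinset fun _ ↦ X | eval (f ∘ a) p = 0} ≤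
      p.totalDegree * #X ^ (n - 1) := by
  have hS := card_filter_eval_eq_zero_le hp (hX.map (f := ⟨f, hf⟩))
  rw [card_map] at hS
  refine (card_le_card_of_injOn (f ∘ ·) (fun a ha ↦ ?_) hf.comp_left.injOn).trans hS
  simp only [coe_filter, Fintype.mem_piFinset, Set.mem_ofPred_eq, mem_map] at ha ⊢
  exact ⟨fun i ↦ ⟨a i, ha.1 i, rfl⟩, ha.2⟩

section Galois

variable {F K : Type*} [Field F] [Field K] [Algebra F K]

theorem linearIndependent_algEquiv_apply_basis {ι : Type*} (B : Module.Basis ι F K) :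
    LinearIndependent K fun (σ : K ≃ₐ[F] K) i ↦ σ (B i) :=
  ((linearIndependent_algHom_toLinearMap F K K).comp _
    AlgEquiv.coe_toAlgHom_injective).map' _ (B.constr K).symm.ker

theorem det_algEquiv_apply_ne_zero_iff [FiniteDimensional F K] [IsGalois F K]
    [DecidableEq (K ≃ₐ[F] K)] (v : (K ≃ₐ[F] K) → K) :
    (Matrix.of fun σ τ : K ≃ₐ[F] K ↦ σ (v τ)).det ≠ 0 ↔ LinearIndependent F v := by
  constructor
  · intro hdet
    refine Fintype.linearIndependent_iff.mpr fun μ hμ τ ↦ (algebraMap F K).injective ?_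
    have := Matrix.eq_zero_of_mulVec_eq_zero hdet (v := fun τ ↦ algebraMap F K (μ τ)) ?_
    · simpa using congrFun this τ
    ext σ
    simpa [Matrix.mulVec_eq_sum, Algebra.smul_def, mul_comm] using congrArg σ hμ
  · intro hv
    have hB := linearIndependent_algEquiv_apply_basis <| basisOfLinearIndependentOfCardEqFinrank hv
      (Fintype.card_eq_nat_card.trans (IsGalois.card_aut_eq_finrank F K))
    rw [coe_basisOfLinearIndependentOfCardEqFinrank] at hB
    exact ((Matrix.isUnit_iff_isUnit_det _).mp
      (Matrix.linearIndependent_rows_iff_isUnit.mp hB)).ne_zero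

theorem exists_basis_algEquiv_apply_iff [FiniteDimensional F K] [IsGalois F K] (α : K) :
    (∃ bb : Module.Basis (K ≃ₐ[F] K) F K, ∀ g, bb g = g α) ↔
      LinearIndependent F fun g : K ≃ₐ[F] K ↦ g α :=
  ⟨fun ⟨bb, hbb⟩ ↦ funext hbb ▸ bb.linearIndependent, fun hα ↦
    ⟨basisOfLinearIndependentOfCardEqFinrank hα
      (Fintype.card_eq_nat_card.trans (IsGalois.card_aut_eq_finrank F K)), fun g ↦ by simp⟩⟩

theorem exists_basis_algEquiv_apply_iff_det_ne_zero [FiniteDimensional F K] [IsGalois F K]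
    [DecidableEq (K ≃ₐ[F] K)] (α : K) :
    (∃ bb : Module.Basis (K ≃ₐ[F] K) F K, ∀ g, bb g = g α) ↔
      (Matrix.of fun σ τ : K ≃ₐ[F] K ↦ σ (τ α)).det ≠ 0 := by
  rw [exists_basis_algEquiv_apply_iff, det_algEquiv_apply_ne_zero_iff]

section orbitDetPoly

variable (F) [FiniteDimensional F K] [DecidableEq (K ≃ₐ[F] K)] {ι : Type*} [Fintype ι]

noncomputable def orbitDetPoly (b : ι → K) : MvPolynomial ι K :=
  (Matrix.of fun σ τ : K ≃ₐ[F] K ↦ ∑ k, C (σ (τ (b k))) * X k).det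

variable {F}

theorem eval_orbitDetPoly (b : ι → K) (a : ι → F) :
    eval (algebraMap F K ∘ a) (orbitDetPoly F b) =
      (Matrix.of fun σ τ : K ≃ₐ[F] K ↦ σ (τ (∑ k, a k • b k))).det := by
  rw [orbitDetPoly, RingHom.map_det]
  congr 1
  ext σ τ
  simp [Algebra.smul_def, mul_comm]

theorem totalDegree_orbitDetPoly_le (b : ι → K) :
    (orbitDetPoly F b).totalDegree ≤ Fintype.card (K ≃ₐ[F] K) := by
  refine (totalDegree_det_le fun σ τ ↦ ?_).trans (mul_one _).le
  refine (totalDegree_finsetSum _ _).trans (Finset.sup_le fun k _ ↦ ?_)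
  exact (totalDegree_mul _ _).trans (by simp [totalDegree_C, totalDegree_X])

theorem orbitDetPoly_ne_zero [IsGalois F K] (b : Module.Basis ι F K) :
    orbitDetPoly F b ≠ 0 := by
  set α := IsGalois.normalBasis F K 1
  have hα : (Matrix.of fun σ τ : K ≃ₐ[F] K ↦ σ (τ α)).det ≠ 0 :=
    (exists_basis_algEquiv_apply_iff_det_ne_zero α).mp
      ⟨IsGalois.normalBasis F K, IsGalois.normalBasis_apply⟩
  intro h
  apply hα
  simpa [h, b.sum_repr] using (eval_orbitDetPoly b (b.repr α)).symm

end orbitDetPoly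

end Galois

open Classical in
theorem card_nonNormal_tuples_le_general
    (F K : Type*) [Field F] [Field K] [Algebra F K]
    [FiniteDimensional F K] [IsGalois F K]
    (n : ℕ) (b : Module.Basis (Fin n) F K) (X : Finset F) (hX : X.Nonempty) :
    ((Fintype.piFinset fun _ : Fin n => X).filter fun a =>
        ¬ ∃ bb : Module.Basis (K ≃ₐ[F] K) F K,
            ∀ g : K ≃ₐ[F] K, bb g = g (∑ k, a k • b k)).card
      ≤ n * X.card ^ (n - 1) := by
  have hcard : Fintype.card (K ≃ₐ[F] K) = n := by
    rw [← Nat.card_eq_fintype_card, IsGalois.card_aut_eq_finrank, Module.finrank_eq_card_basis b,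
      Fintype.card_fin]
  calc _ ≤ #{a ∈ Fintype.piFinset fun _ ↦ X |
            eval (algebraMap F K ∘ a) (orbitDetPoly F b) = 0} := by
        refine card_le_card (monotone_filter_right _ fun a _ hnonNormal ↦ ?_)
        rwa [eval_orbitDetPoly, ← not_ne_iff, ← exists_basis_algEquiv_apply_iff_det_ne_zero]
    _ ≤ (orbitDetPoly F b).totalDegree * #X ^ (n - 1) :=
        card_filter_eval_comp_eq_zero_le (algebraMap F K).injective (orbitDetPoly_ne_zero b) hX
    _ ≤ n * #X ^ (n - 1) := by
        gcongr
        exact (totalDegree_orbitDetPoly_le _).trans hcard.le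

open Classical in
theorem card_nonNormal_tuples_le
    (F K : Type*) [Field F] [Field K] [CharZero F] [Algebra F K]
    [FiniteDimensional F K] [IsGalois F K]
    (n : ℕ) (b : Module.Basis (Fin n) F K) (X : Finset F) (hX : X.Nonempty) :
    ((Fintype.piFinset fun _ : Fin n => X).filter fun a =>
        ¬ ∃ bb : Module.Basis (K ≃ₐ[F] K) F K,
            ∀ g : K ≃ₐ[F] K, bb g = g (∑ k, a k • b k)).card
      ≤ n * X.card ^ (n - 1) :=
  card_nonNormal_tuples_le_general F K n b X hX
end

section
/- Let F be a field of characteristic zero and m, m' coprime positive integers. There is an F-algebra isomorphism γ from the tensor product (F[x]/⟨Φ_m(x)⟩) ⊗_F (F[x']/⟨Φ_{m'}(x')⟩) to F[z]/⟨Φ_{mm'}(z)⟩ which sends the product of the two root classes, (x mod Φ_m) ⊗ (x' mod Φ_{m'}), to the root class z mod Φ_{mm'}. -/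
/-!
Let `z` be the root of `Φ_{mm'}`, `s = m'^φ(m)` and `t = m^φ(m')`. For a primitive `mm'`-th root
of unity `ζ`, `ζ^s` and `ζ^t` are primitive `m`-th and `m'`-th roots; testing on a complex `ζ`
shows `Φ_{mm'} ∣ Φ_m(X^s)` and `Φ_{mm'} ∣ Φ_{m'}(X^t)` over `ℤ`, hence over `F`. So `x ↦ z^s`,
`x' ↦ z^t` defines an algebra map on the tensor product, sending `x ⊗ x'` to `z^(s+t) = z`
because `s + t ≡ 1 [MOD mm']` by Euler's theorem. A surjection between spaces of equal dimension
`φ(m) φ(m') = φ(mm')`, it is an isomorphism.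
-/

open TensorProduct Polynomial
open scoped Nat

theorem cyclotomic_mul_dvd_expand_cyclotomic (R : Type*) [CommRing R] {m n c : ℕ}
    (hm : 0 < m) (hn : 0 < n) (hc : c.Coprime m) :
    cyclotomic (m * n) R ∣ expand R (n * c) (cyclotomic m R) := by
  have hmn : 0 < m * n := Nat.mul_pos hm hn
  obtain ⟨ζ, hζ⟩ : ∃ ζ : ℂ, IsPrimitiveRoot ζ (m * n) :=
    ⟨_, Complex.isPrimitiveRoot_exp _ hmn.ne'⟩
  have hζm : IsPrimitiveRoot (ζ ^ (n * c)) m :=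
    pow_mul ζ n c ▸ (hζ.pow hmn (mul_comm m n)).pow_of_coprime c hc
  have hℤ : cyclotomic (m * n) ℤ ∣ expand ℤ (n * c) (cyclotomic m ℤ) := by
    rw [cyclotomic_eq_minpoly hζ hmn]
    refine minpoly.isIntegrallyClosed_dvd (hζ.isIntegral hmn) ?_
    rw [expand_aeval, aeval_def, eval₂_eq_eval_map, map_cyclotomic]
    exact hζm.isRoot_cyclotomic hm
  simpa only [map_cyclotomic, map_expand] using Polynomial.map_dvd (Int.castRingHom R) hℤ

theorem Nat.pow_totient_add_pow_totient_modEq_one {m n : ℕ} (hm : 0 < m) (hn : 0 < n)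
    (h : m.Coprime n) : n ^ φ m + m ^ φ n ≡ 1 [MOD m * n] := by
  rw [← Nat.modEq_and_modEq_iff_modEq_mul h]
  constructor
  · simpa using (Nat.ModEq.pow_totient h.symm).add
      (Nat.modEq_zero_iff_dvd.2 (dvd_pow_self m (Nat.totient_pos.2 hn).ne'))
  · simpa using (Nat.modEq_zero_iff_dvd.2 (dvd_pow_self n (Nat.totient_pos.2 hm).ne')).add
      (Nat.ModEq.pow_totient h)

namespace AdjoinRoot

variable {R : Type*} [CommRing R]

instance finite_cyclotomic (n : ℕ) : Module.Finite R (AdjoinRoot (cyclotomic n R)) :=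
  (cyclotomic.monic n R).finite_adjoinRoot

instance free_cyclotomic (n : ℕ) : Module.Free R (AdjoinRoot (cyclotomic n R)) :=
  (cyclotomic.monic n R).free_adjoinRoot

theorem finrank_cyclotomic [Nontrivial R] (n : ℕ) :
    Module.finrank R (AdjoinRoot (cyclotomic n R)) = φ n :=
  (finrank_quotient_span_eq_natDegree' (cyclotomic.monic n R)).trans (natDegree_cyclotomic n R)

theorem root_cyclotomic_pow_self (n : ℕ) : root (cyclotomic n R) ^ n = 1 := by
  rw [← sub_eq_zero, ← mk_X, ← map_pow, ← map_one (mk _), ← map_sub, mk_eq_zero]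
  exact cyclotomic.dvd_X_pow_sub_one n R

theorem exists_algHom_root_eq_root_pow {p q : R[X]} {k : ℕ} (h : q ∣ expand R k p) :
    ∃ f : AdjoinRoot p →ₐ[R] AdjoinRoot q, f (root p) = root q ^ k := by
  refine ⟨liftAlgHom p (Algebra.ofId R _) (root q ^ k) ?_, liftAlgHom_root ..⟩
  rwa [Algebra.toRingHom_ofId, ← aeval_def, ← expand_aeval, aeval_eq, mk_eq_zero]

theorem algHom_surjective_of_root_mem_range {A : Type*} [Semiring A] [Algebra R A] {p : R[X]}
    (f : A →ₐ[R] AdjoinRoot p) (h : root p ∈ f.range) : Function.Surjective f := by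
  rw [← AlgHom.range_eq_top, eq_top_iff, ← adjoinRoot_eq_top, Algebra.adjoin_le_iff,
    Set.singleton_subset_iff]
  exact h

end AdjoinRoot

theorem cyclotomic_tensor_equiv_coprime_general
    (F : Type*) [Field F] (m m' : ℕ)
    (hm : 0 < m) (hm' : 0 < m') (hcop : Nat.Coprime m m') :
    ∃ γ : (AdjoinRoot (cyclotomic m F)) ⊗[F] (AdjoinRoot (cyclotomic m' F))
        ≃ₐ[F] AdjoinRoot (cyclotomic (m * m') F),
      γ (AdjoinRoot.root (cyclotomic m F) ⊗ₜ[F]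
          AdjoinRoot.root (cyclotomic m' F)) =
        AdjoinRoot.root (cyclotomic (m * m') F) := by
  have hdvd : cyclotomic (m * m') F ∣ expand F (m' ^ φ m) (cyclotomic m F) := by
    rw [← Nat.sub_add_cancel (Nat.totient_pos.2 hm), pow_succ']
    exact cyclotomic_mul_dvd_expand_cyclotomic F hm hm' (hcop.symm.pow_left _)
  have hdvd' : cyclotomic (m * m') F ∣ expand F (m ^ φ m') (cyclotomic m' F) := by
    rw [← Nat.sub_add_cancel (Nat.totient_pos.2 hm'), pow_succ', mul_comm m m']
    exact cyclotomic_mul_dvd_expand_cyclotomic F hm' hm (hcop.pow_left _)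
  obtain ⟨f, hf⟩ := AdjoinRoot.exists_algHom_root_eq_root_pow hdvd
  obtain ⟨g, hg⟩ := AdjoinRoot.exists_algHom_root_eq_root_pow hdvd'
  set γ := Algebra.TensorProduct.productMap f g
  have hγ : γ (AdjoinRoot.root (cyclotomic m F) ⊗ₜ AdjoinRoot.root (cyclotomic m' F)) =
      AdjoinRoot.root (cyclotomic (m * m') F) := by
    rw [Algebra.TensorProduct.productMap_apply_tmul, hf, hg, ← pow_add]
    exact (pow_eq_pow_of_modEq (Nat.pow_totient_add_pow_totient_modEq_one hm hm' hcop)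
      (AdjoinRoot.root_cyclotomic_pow_self _)).trans (pow_one _)
  have hsurj : Function.Surjective γ := AdjoinRoot.algHom_surjective_of_root_mem_range γ ⟨_, hγ⟩
  have hrank : Module.finrank F (AdjoinRoot (cyclotomic m F) ⊗[F] AdjoinRoot (cyclotomic m' F)) =
      Module.finrank F (AdjoinRoot (cyclotomic (m * m') F)) := by
    rw [Module.finrank_tensorProduct, AdjoinRoot.finrank_cyclotomic,
      AdjoinRoot.finrank_cyclotomic, AdjoinRoot.finrank_cyclotomic, Nat.totient_mul hcop]
  exact ⟨AlgEquiv.ofBijective γ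
    ⟨(LinearMap.injective_iff_surjective_of_finrank_eq_finrank hrank).2 hsurj, hsurj⟩, hγ⟩

/-- for coprime m, m', there is an F-algebra isomorphism
(F[x]/⟨Φ_m⟩) ⊗_F (F[x']/⟨Φ_{m'}⟩) ≃ F[z]/⟨Φ_{mm'}⟩ sending the product
of the two root classes to the root class of Φ_{mm'}. -/
theorem cyclotomic_tensor_equiv_coprime
    (F : Type*) [Field F] [CharZero F] (m m' : ℕ)
    (hm : 0 < m) (hm' : 0 < m') (hcop : Nat.Coprime m m') :
    ∃ γ : (AdjoinRoot (cyclotomic m F)) ⊗[F] (AdjoinRoot (cyclotomic m' F))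
        ≃ₐ[F] AdjoinRoot (cyclotomic (m * m') F),
      γ (AdjoinRoot.root (cyclotomic m F) ⊗ₜ[F]
          AdjoinRoot.root (cyclotomic m' F)) =
        AdjoinRoot.root (cyclotomic (m * m') F) :=
  cyclotomic_tensor_equiv_coprime_general F m m' hm hm' hcop
end

section
/- Let F be a field of characteristic zero, p_1, …, p_t pairwise distinct primes, c_1, …, c_t nonnegative integers, and μ = p_1^{c_1} ⋯ p_t^{c_t}. Then there is an F-algebra isomorphism Γ from the quotient of the multivariate polynomial ring F[x_1, …, x_t] by the ideal generated by Φ_{p_1^{c_1}}(x_1), …, Φ_{p_t^{c_t}}(x_t) to F[z]/⟨Φ_μ(z)⟩, which sends the class of the product x_1 x_2 ⋯ x_t to the class of z. -/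
/-!
Write `μ = ∏ qᵢ` with the `qᵢ = pᵢ ^ cᵢ` pairwise coprime, and `z` for the root of `Φ_μ`. The
Chinese remainder theorem gives exponents `eᵢ ≡ 1 (mod qᵢ)` divisible by every other `qⱼ`. Over `ℚ`,
`Φ_μ` is the minimal polynomial of a primitive `μ`-th root of unity `ζ`, and `ζ ^ eᵢ` is a primitive
`qᵢ`-th root, so `Φ_μ ∣ Φ_{qᵢ}(X ^ eᵢ)`. Hence `xᵢ ↦ z ^ eᵢ` defines an algebra map; it sends
`x₁ ⋯ xₜ` to `z ^ (∑ eᵢ) = z`, as `∑ eᵢ ≡ 1 (mod μ)`, so it is surjective. The source is generated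
by the `xᵢ`, each a root of a monic polynomial of degree `φ(qᵢ)`, so its dimension is at most
`∏ φ(qᵢ) = φ(μ)`, the dimension of the target, and the surjection is an isomorphism.
-/

open Polynomial Module

open scoped Function

namespace Nat

theorem totient_prod_of_pairwise_coprime {ι : Type*} (q : ι → ℕ) (s : Finset ι)
    (hs : (s : Set ι).Pairwise (Coprime on q)) :
    (∏ i ∈ s, q i).totient = ∏ i ∈ s, (q i).totient := by
  classical
  induction s using Finset.induction_on with
  | empty => simp
  | insert i s hi ih =>
    rw [Finset.coe_insert, Set.pairwise_insert_of_symm] at hs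
    rw [Finset.prod_insert hi, Finset.prod_insert hi, totient_mul, ih hs.1]
    exact Coprime.prod_right fun j hj => hs.2 j hj (ne_of_mem_of_not_mem hj hi).symm

variable {ι : Type*} [Fintype ι] {q : ι → ℕ}

theorem modEq_prod_iff (hq : Pairwise (Coprime on q)) {a b : ℕ} :
    a ≡ b [MOD ∏ i, q i] ↔ ∀ i, a ≡ b [MOD q i] := by
  simp only [← ZMod.natCast_eq_natCast_iff]
  rw [← (ZMod.prodEquivPi q hq).injective.eq_iff, funext_iff]
  simp

theorem exists_modEq_one_and_dvd (hq : Pairwise (Coprime on q)) :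
    ∃ e : ι → ℕ, (∀ i, e i ≡ 1 [MOD q i]) ∧ ∀ i j, i ≠ j → q j ∣ e i := by
  classical
  have hco : ∀ i, Coprime (q i) (∏ j ∈ Finset.univ.erase i, q j) := fun i =>
    Coprime.prod_right fun j hj => hq (Finset.ne_of_mem_erase hj).symm
  refine ⟨fun i => chineseRemainder (hco i) 1 0, fun i => (chineseRemainder (hco i) 1 0).2.1,
    fun i j hij => ?_⟩
  exact (Finset.dvd_prod_of_mem q (Finset.mem_erase.2 ⟨hij.symm, Finset.mem_univ j⟩)).trans
    (modEq_zero_iff_dvd.1 (chineseRemainder (hco i) 1 0).2.2)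

theorem prod_dvd_mul_of_forall_ne_dvd (hq : Pairwise (Coprime on q)) {i : ι} {e : ℕ}
    (he : ∀ j, i ≠ j → q j ∣ e) : ∏ j, q j ∣ e * q i := by
  rw [← modEq_zero_iff_dvd, modEq_prod_iff hq]
  intro j
  rw [modEq_zero_iff_dvd]
  by_cases hij : i = j
  · exact hij ▸ dvd_mul_left _ _
  · exact dvd_mul_of_dvd_left (he j hij) _

theorem sum_modEq_one_of_modEq_one_of_dvd (hq : Pairwise (Coprime on q)) {e : ι → ℕ}
    (he1 : ∀ i, e i ≡ 1 [MOD q i]) (he0 : ∀ i j, i ≠ j → q j ∣ e i) : ∑ i, e i ≡ 1 [MOD ∏ i, q i] := by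
  classical
  refine (modEq_prod_iff hq).2 fun j => ?_
  rw [← Finset.add_sum_erase _ _ (Finset.mem_univ j)]
  have hrest : ∑ i ∈ Finset.univ.erase j, e i ≡ 0 [MOD q j] :=
    modEq_zero_iff_dvd.2 <| Finset.dvd_sum fun i hi => he0 i j (Finset.ne_of_mem_erase hi)
  simpa using (he1 j).add hrest

end Nat

theorem IsPrimitiveRoot.pow_of_dvd_mul_of_coprime {M : Type*} [CommMonoid M] {ζ : M}
    {n m e : ℕ} (hζ : IsPrimitiveRoot ζ n) (hmn : m ∣ n) (hn : n ∣ e * m)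
    (he : e.Coprime m) : IsPrimitiveRoot (ζ ^ e) m := by
  refine ⟨by rwa [← pow_mul, hζ.pow_eq_one_iff_dvd], fun l hl => ?_⟩
  rw [← pow_mul, hζ.pow_eq_one_iff_dvd] at hl
  exact he.symm.dvd_of_dvd_mul_left (hmn.trans hl)

theorem Polynomial.cyclotomic_dvd_cyclotomic_comp_X_pow (K : Type*) [Field K] [CharZero K]
    {n m e : ℕ} (hmn : m ∣ n) (hn : n ∣ e * m) (he : e.Coprime m) :
    cyclotomic n K ∣ (cyclotomic m K).comp (X ^ e) := by
  rcases Nat.eq_zero_or_pos n with rfl | hn0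
  · simp
  have hζ := Complex.isPrimitiveRoot_exp n hn0.ne'
  have hQ : cyclotomic n ℚ ∣ (cyclotomic m ℚ).comp (X ^ e) := by
    rw [cyclotomic_eq_minpoly_rat hζ hn0]
    refine minpoly.dvd ℚ _ ?_
    rw [aeval_comp, map_pow, aeval_X, aeval_def, eval₂_eq_eval_map, map_cyclotomic]
    exact (hζ.pow_of_dvd_mul_of_coprime hmn hn he).isRoot_cyclotomic
      (Nat.pos_of_dvd_of_pos hmn hn0)
  simpa [Polynomial.map_comp, map_cyclotomic] using Polynomial.map_dvd (algebraMap ℚ K) hQ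

theorem AdjoinRoot.aeval_root_eq_zero_of_dvd {R : Type*} [CommRing R] {f p : R[X]} (h : f ∣ p) :
    aeval (root f) p = 0 :=
  (aeval_eq p).trans (mk_eq_zero.2 h)

theorem AdjoinRoot.surjective_of_apply_eq_root {R B : Type*} [CommRing R] [Semiring B]
    [Algebra R B] {f : R[X]} (φ : B →ₐ[R] AdjoinRoot f) {b : B} (hb : φ b = root f) :
    Function.Surjective φ := by
  rw [← AlgHom.range_eq_top, ← top_le_iff, ← adjoinRoot_eq_top, Algebra.adjoin_le_iff,
    Set.singleton_subset_iff]
  exact ⟨b, hb⟩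

section FiniteDimension

variable {F A : Type*} [Field F] [CommRing A] [Algebra F A]

theorem Algebra.finrank_adjoin_singleton_le {x : A} {g : F[X]} (hg : g.Monic)
    (hx : aeval x g = 0) : finrank F (Algebra.adjoin F {x}) ≤ g.natDegree := by
  classical
  rw [← Subalgebra.finrank_toSubmodule, ← Submodule.span_range_natDegree_eq_adjoin hg hx]
  exact (finrank_span_finset_le_card _).trans (Finset.card_image_le.trans (by simp))

theorem Algebra.finrank_adjoin_image_le {ι : Type*} {x : ι → A} {g : ι → F[X]}
    (hg : ∀ i, (g i).Monic) (hx : ∀ i, aeval (x i) (g i) = 0) (s : Finset ι) :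
    finrank F (Algebra.adjoin F (x '' s)) ≤ ∏ i ∈ s, (g i).natDegree := by
  classical
  induction s using Finset.induction_on with
  | empty =>
    rw [Finset.coe_empty, Set.image_empty, Algebra.adjoin_empty, ← Subalgebra.finrank_toSubmodule,
      Algebra.toSubmodule_bot, Submodule.one_eq_span]
    exact (finrank_span_le_card _).trans (by simp)
  | insert i s hi ih =>
    rw [Finset.coe_insert, Set.image_insert_eq, Set.insert_eq, Algebra.adjoin_union,
      Finset.prod_insert hi]
    exact (Subalgebra.finrank_sup_le_of_free _ _).trans
      (Nat.mul_le_mul (finrank_adjoin_singleton_le (hg i) (hx i)) ih)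

theorem Module.finite_and_finrank_le_of_adjoin_range_eq_top {ι : Type*} [Fintype ι]
    {x : ι → A} {g : ι → F[X]} (hg : ∀ i, (g i).Monic) (hx : ∀ i, aeval (x i) (g i) = 0)
    (htop : Algebra.adjoin F (Set.range x) = ⊤) :
    Module.Finite F A ∧ finrank F A ≤ ∏ i, (g i).natDegree := by
  have hfin : Module.Finite F (Algebra.adjoin F (Set.range x)) :=
    Algebra.finite_adjoin_of_finite_of_isIntegral (Set.finite_range x)
      (by rintro _ ⟨i, rfl⟩; exact ⟨g i, hg i, hx i⟩)
  have hle := Algebra.finrank_adjoin_image_le hg hx Finset.univ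
  rw [htop] at hfin
  rw [Finset.coe_univ, Set.image_univ, htop] at hle
  let e : (⊤ : Subalgebra F A) ≃ₗ[F] A := Subalgebra.topEquiv.toLinearEquiv
  exact ⟨.equiv e, e.finrank_eq ▸ hle⟩

end FiniteDimension

namespace MvPolynomial

variable {F σ : Type*} [Field F]

theorem adjoin_range_quotient_mk_X (I : Ideal (MvPolynomial σ F)) :
    Algebra.adjoin F (Set.range fun i => Ideal.Quotient.mk I (X i)) = ⊤ := by
  have hrange : (Set.range fun i => Ideal.Quotient.mk I (X i)) =
      Ideal.Quotient.mkₐ F I '' Set.range X := by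
    rw [← Set.range_comp]
    rfl
  rw [hrange, Algebra.adjoin_image, adjoin_range_X, Algebra.map_top, AlgHom.range_eq_top]
  exact Ideal.Quotient.mkₐ_surjective F I

theorem aeval_eq_zero_of_mem_span_aeval_X {A : Type*} [CommRing A] [Algebra F A] {g : σ → F[X]}
    {x : σ → A} (hx : ∀ i, Polynomial.aeval (x i) (g i) = 0) {a : MvPolynomial σ F}
    (ha : a ∈ Ideal.span (Set.range fun i => Polynomial.aeval (X i) (g i))) :
    aeval x a = 0 := by
  refine (Ideal.span_le (I := RingHom.ker (aeval x))).2 ?_ ha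
  rintro _ ⟨i, rfl⟩
  rw [SetLike.mem_coe, RingHom.mem_ker, ← Polynomial.aeval_algHom_apply, aeval_X]
  exact hx i

theorem finite_and_finrank_quotient_span_aeval_X_le [Fintype σ] {g : σ → F[X]}
    (hg : ∀ i, (g i).Monic) :
    Module.Finite F
        (MvPolynomial σ F ⧸ Ideal.span (Set.range fun i => Polynomial.aeval (X (R := F) i) (g i)))
      ∧ finrank F
        (MvPolynomial σ F ⧸ Ideal.span (Set.range fun i => Polynomial.aeval (X (R := F) i) (g i)))
        ≤ ∏ i, (g i).natDegree := by
  refine Module.finite_and_finrank_le_of_adjoin_range_eq_top hg (fun i => ?_)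
    (adjoin_range_quotient_mk_X _)
  rw [← Ideal.Quotient.mkₐ_eq_mk F, Polynomial.aeval_algHom_apply, Ideal.Quotient.mkₐ_eq_mk,
    Ideal.Quotient.eq_zero_iff_mem]
  exact Ideal.subset_span ⟨i, rfl⟩

end MvPolynomial

theorem exists_algEquiv_quotient_cyclotomic (F : Type*) [Field F] [CharZero F] {ι : Type*}
    [Fintype ι] (q : ι → ℕ) (hq : Pairwise (Nat.Coprime on q)) :
    ∃ Γ : (MvPolynomial ι F ⧸ Ideal.span (Set.range fun i =>
          Polynomial.aeval (MvPolynomial.X (R := F) i) (cyclotomic (q i) F)))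
        ≃ₐ[F] AdjoinRoot (cyclotomic (∏ i, q i) F),
      Γ (Ideal.Quotient.mk _ (∏ i, MvPolynomial.X i)) =
        AdjoinRoot.root (cyclotomic (∏ i, q i) F) := by
  obtain ⟨e, he1, he0⟩ := Nat.exists_modEq_one_and_dvd hq
  set z := AdjoinRoot.root (cyclotomic (∏ i, q i) F)
  have hz : z ^ ∏ i, q i = 1 := by
    simpa [sub_eq_zero] using
      AdjoinRoot.aeval_root_eq_zero_of_dvd (cyclotomic.dvd_X_pow_sub_one (∏ i, q i) F)
  have hze : ∀ i, aeval (z ^ e i) (cyclotomic (q i) F) = 0 := fun i => by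
    have hcop : (e i).Coprime (q i) := by simpa using (he1 i).gcd_eq
    simpa [aeval_comp] using AdjoinRoot.aeval_root_eq_zero_of_dvd <|
      cyclotomic_dvd_cyclotomic_comp_X_pow F (Finset.dvd_prod_of_mem q (Finset.mem_univ i))
        (Nat.prod_dvd_mul_of_forall_ne_dvd hq (he0 i)) hcop
  let Γ := Ideal.Quotient.liftₐ _ (MvPolynomial.aeval fun i => z ^ e i)
    fun _ ha => MvPolynomial.aeval_eq_zero_of_mem_span_aeval_X hze ha
  have hΓ : Γ (Ideal.Quotient.mk _ (∏ i, MvPolynomial.X i)) = z := by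
    calc
      _ = ∏ i, z ^ e i := by
        show MvPolynomial.aeval (fun i => z ^ e i) (∏ i, MvPolynomial.X i) = _
        simp
      _ = z ^ ∑ i, e i := Finset.prod_pow_eq_pow_sum _ _ _
      _ = z := by
        rw [pow_eq_pow_of_modEq (Nat.sum_modEq_one_of_modEq_one_of_dvd hq he1 he0) hz, pow_one]
  obtain ⟨hfin, hle⟩ := MvPolynomial.finite_and_finrank_quotient_span_aeval_X_le (F := F)
    (fun i => cyclotomic.monic (q i) F)
  have hdim : ∏ i, (cyclotomic (q i) F).natDegree =
      finrank F (AdjoinRoot (cyclotomic (∏ i, q i) F)) := by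
    simp only [(AdjoinRoot.powerBasis (cyclotomic_ne_zero _ F)).finrank, AdjoinRoot.powerBasis_dim,
      natDegree_cyclotomic, Nat.totient_prod_of_pairwise_coprime q _ (hq.set_pairwise _)]
  have := (AdjoinRoot.powerBasis (cyclotomic_ne_zero (∏ i, q i) F)).finite
  exact ⟨AlgEquiv.ofBijective Γ <| OrzechProperty.bijective_of_surjective_of_finrank_le
    Γ.toLinearMap (AdjoinRoot.surjective_of_apply_eq_root Γ hΓ) (hle.trans hdim.le), hΓ⟩

/-- for pairwise distinct primes p_i and exponents c_i with
μ = ∏ p_i^{c_i}, there is an F-algebra isomorphism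
F[x_1,…,x_t]/⟨Φ_{p_1^{c_1}}(x_1),…,Φ_{p_t^{c_t}}(x_t)⟩ ≃ F[z]/⟨Φ_μ⟩
sending the class of x_1⋯x_t to the class of z. -/
theorem multi_cyclotomic_equiv
    (F : Type*) [Field F] [CharZero F] (t : ℕ)
    (p : Fin t → ℕ) (c : Fin t → ℕ)
    (hp : ∀ i, (p i).Prime) (hdist : Function.Injective p) :
    ∃ Γ : (MvPolynomial (Fin t) F ⧸
          Ideal.span (Set.range fun i : Fin t =>
            Polynomial.aeval (MvPolynomial.X (R := F) i) (cyclotomic (p i ^ c i) F)))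
        ≃ₐ[F] AdjoinRoot (cyclotomic (∏ i : Fin t, p i ^ c i) F),
      Γ (Ideal.Quotient.mk _ (∏ i : Fin t, MvPolynomial.X i)) =
        AdjoinRoot.root (cyclotomic (∏ i : Fin t, p i ^ c i) F) :=
  exists_algEquiv_quotient_cyclotomic F (fun i => p i ^ c i) fun i j hij =>
    ((Nat.coprime_primes (hp i) (hp j)).2 (hdist.ne hij)).pow _ _
end

section
/- Let F be a field of characteristic zero, p a prime, and c_1, …, c_t nonnegative integers with c_1 ≥ c_i for all i. Let A := F[x_1, …, x_t]/⟨Φ_{p^{c_1}}(x_1), …, Φ_{p^{c_t}}(x_t)⟩ and a := F[x]/⟨Φ_{p^{c_1}}(x)⟩. Then there is an F-algebra isomorphism Θ from A to the product algebra a^N of N copies of a, where N = φ(p^{c_2}) ⋯ φ(p^{c_t}) = dim_F(A)/dim_F(a). -/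
open Polynomial

/-- The ideal ⟨Φ_{p^{c_1}}(x_1), …, Φ_{p^{c_t}}(x_t)⟩ of F[x_1,…,x_t]. -/
noncomputable def cyclotomicIdeal (F : Type*) [Field F] (p t : ℕ) (c : Fin t → ℕ) :
    Ideal (MvPolynomial (Fin t) F) :=
  Ideal.span (Set.range fun i : Fin t =>
    Polynomial.aeval (MvPolynomial.X i) (cyclotomic (p ^ c i) F))

/-!
Adjoining `x₁` first presents `A` as `a[x₂, …, x_t] / (Φ_{p^{c_i}}(x_i))`. Since `p^{c_i} ∣ p^{c₁}`,
over `a` each `Φ_{p^{c_i}}` is the product of the `X - ζ` with `ζ` running over the images of the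
primitive `p^{c_i}`-th roots of unity of `ℚ(ζ_{p^{c₁}})`; their differences are nonzero in that
field, hence units in `a`. The Chinese remainder theorem then splits off one factor
`a[x] / (Φ_{p^{c_i}}) ≅ a^{φ(p^{c_i})}` per variable, giving `A ≅ a^N`, and comparing dimensions
gives `N = dim A / dim a`.
-/

def AlgEquiv.curry (R A α β : Type*) [CommSemiring R] [Semiring A] [Algebra R A] :
    (α × β → A) ≃ₐ[R] (α → β → A) :=
  { Equiv.curry α β A with
    map_mul' := fun _ _ => rfl
    map_add' := fun _ _ => rfl
    commutes' := fun _ => rfl }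

theorem Fin.prod_univ_erase_zero {M : Type*} [CommMonoid M] {n : ℕ} (g : Fin (n + 1) → M) :
    ∏ i ∈ Finset.univ.erase 0, g i = ∏ i : Fin n, g i.succ := by
  have : Finset.univ.erase 0 = Finset.univ.map (Fin.succEmb n) := by
    ext i
    cases i using Fin.cases <;> simp
  rw [this, Finset.prod_map]
  rfl

theorem Ideal.map_span_range_aeval {R B C σ F : Type*} [CommRing R] [CommRing B] [CommRing C]
    [Algebra R B] [Algebra R C] [FunLike F B C] [AlgHomClass F R B C] (φ : F) (x : σ → B)
    (f : σ → R[X]) :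
    (Ideal.span (Set.range fun i => aeval (x i) (f i))).map φ =
      Ideal.span (Set.range fun i => aeval (φ (x i)) (f i)) := by
  simp only [Ideal.map_span, ← Set.range_comp, Function.comp_def, aeval_algHom_apply]

noncomputable def Ideal.quotientSupAlgEquiv {R P B : Type*} [CommRing R] [CommRing P]
    [CommRing B] [Algebra R P] [Algebra R B] (I J : Ideal P) (e : (P ⧸ I) ≃ₐ[R] B)
    (J' : Ideal B) (h : J' = J.map ((e : P ⧸ I →ₐ[R] B).comp (Ideal.Quotient.mkₐ R I))) :
    (P ⧸ I ⊔ J) ≃ₐ[R] (B ⧸ J') :=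
  (DoubleQuot.quotQuotEquivQuotSupₐ R I J).symm.trans <|
    Ideal.quotientEquivAlg _ _ e (h.trans (Ideal.map_map _ _).symm)

namespace Polynomial

variable {R S : Type*} [CommRing R] [CommRing S]

def SplitsWithUnitDifferences (f : R[X]) (N : ℕ) : Prop :=
  ∃ r : Fin N → R, f = ∏ k, (X - C (r k)) ∧ Pairwise fun k j => IsUnit (r k - r j)

theorem SplitsWithUnitDifferences.map {f : R[X]} {N : ℕ} (hf : f.SplitsWithUnitDifferences N)
    (ψ : R →+* S) : (f.map ψ).SplitsWithUnitDifferences N := by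
  obtain ⟨r, rfl, hr⟩ := hf
  refine ⟨ψ ∘ r, by simp [Polynomial.map_prod], fun k j hkj => ?_⟩
  simpa using (hr hkj).map ψ

theorem SplitsWithUnitDifferences.nonempty_adjoinRoot_algEquiv_pi {f : R[X]} {N : ℕ}
    (hf : f.SplitsWithUnitDifferences N) : Nonempty (AdjoinRoot f ≃ₐ[R] (Fin N → R)) := by
  obtain ⟨r, rfl, hr⟩ := hf
  have hcop : Pairwise fun k j => IsCoprime (X - C (r k)) (X - C (r j)) :=
    fun k j hkj => isCoprime_X_sub_C_of_isUnit_sub (hr hkj)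
  exact ⟨(Ideal.quotientEquivAlgOfEq R (Ideal.iInf_span_singleton hcop).symm).trans <|
    (AlgEquiv.ofRingEquiv (f := Ideal.quotientInfRingEquivPiQuotient _
      fun k j hkj => (Ideal.isCoprime_span_singleton_iff _ _).mpr (hcop hkj)) fun _ => rfl).trans <|
    AlgEquiv.piCongrRight fun k => quotientSpanXSubCAlgEquiv (r k)⟩

theorem splitsWithUnitDifferences_cyclotomic {K : Type*} [Field K] {μ : K} {d : ℕ}
    (hμ : IsPrimitiveRoot μ d) : (cyclotomic d K).SplitsWithUnitDifferences d.totient := by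
  let e := (primitiveRoots d K).equivFinOfCardEq hμ.card_primitiveRoots
  refine ⟨fun k => e.symm k, ?_, fun k j hkj => ?_⟩
  · rw [cyclotomic_eq_prod_X_sub_primitiveRoots hμ, ← Finset.prod_coe_sort, ← e.symm.prod_comp]
  · exact (sub_ne_zero.mpr fun h => hkj (e.symm.injective (Subtype.ext h))).isUnit

theorem splitsWithUnitDifferences_cyclotomic_adjoinRoot (F : Type*) [Field F] [CharZero F]
    {d n : ℕ} (hn : 0 < n) (hdn : d ∣ n) :
    (cyclotomic d (AdjoinRoot (cyclotomic n F))).SplitsWithUnitDifferences d.totient := by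
  have : Fact (Irreducible (cyclotomic n ℚ)) := ⟨cyclotomic.irreducible_rat hn⟩
  have hζ : IsPrimitiveRoot (AdjoinRoot.root (cyclotomic n ℚ)) n := by
    rw [← isRoot_cyclotomic_iff_charZero hn, ← map_cyclotomic _ (AdjoinRoot.of _)]
    exact AdjoinRoot.isRoot_root _
  obtain ⟨m, rfl⟩ := hdn
  let ψ := AdjoinRoot.map (algebraMap ℚ F) (cyclotomic (d * m) ℚ) (cyclotomic (d * m) F)
    (by rw [map_cyclotomic])
  simpa using (splitsWithUnitDifferences_cyclotomic (hζ.pow hn (mul_comm d m))).map ψ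

end Polynomial

namespace MvPolynomial

section SpanAevalX

variable {R A B : Type*} [CommRing R] [CommRing A] [CommRing B] [Algebra R A] [Algebra R B]
  {σ τ : Type*}

noncomputable def spanAevalX (f : σ → R[X]) : Ideal (MvPolynomial σ A) :=
  Ideal.span (Set.range fun i => Polynomial.aeval (X i) (f i))

theorem spanAevalX_eq_spanAevalX_map (f : σ → R[X]) :
    spanAevalX (A := A) f = spanAevalX (R := A) fun i => (f i).map (algebraMap R A) := by
  simp only [spanAevalX, Polynomial.aeval_map_algebraMap]

noncomputable def quotientSpanAevalXRenameEquiv (f : σ → R[X]) (e : σ ≃ τ) :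
    (MvPolynomial σ R ⧸ spanAevalX f) ≃ₐ[R] (MvPolynomial τ R ⧸ spanAevalX (f ∘ e.symm)) :=
  Ideal.quotientEquivAlg _ _ (renameEquiv R e) <| by
    simp only [spanAevalX]
    rw [Ideal.map_coe, Ideal.map_span_range_aeval, ← e.surjective.range_comp]
    simp [Function.comp_def]

noncomputable def quotientSpanAevalXMapEquiv (f : σ → R[X]) (e : A ≃ₐ[R] B) :
    (MvPolynomial σ A ⧸ spanAevalX f) ≃ₐ[R] (MvPolynomial σ B ⧸ spanAevalX f) :=
  Ideal.quotientEquivAlg _ _ (mapAlgEquiv σ e) <| by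
    simp only [spanAevalX]
    rw [Ideal.map_coe, Ideal.map_span_range_aeval]
    simp

end SpanAevalX

variable {R : Type*} [CommRing R] {σ : Type*}

noncomputable def quotientMapCSpanAlgEquivAdjoinRoot (f : R[X]) :
    (MvPolynomial σ R[X] ⧸ (Ideal.span {f}).map (C : R[X] →+* MvPolynomial σ R[X])) ≃ₐ[R]
      MvPolynomial σ (AdjoinRoot f) :=
  AlgEquiv.ofRingEquiv
    (f := (quotientEquivQuotientMvPolynomial (Ideal.span {f})).symm.toRingEquiv)
    fun _ => eval₂_C _ _ _

@[simp]
theorem quotientMapCSpanAlgEquivAdjoinRoot_mk_X (f : R[X]) (i : σ) :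
    quotientMapCSpanAlgEquivAdjoinRoot f (Ideal.Quotient.mk _ (X i)) = X i :=
  eval₂_X _ _ i

noncomputable def quotientSpanAevalXOptionEquiv (f : Option σ → R[X]) :
    (MvPolynomial (Option σ) R ⧸ spanAevalX f) ≃ₐ[R]
      (MvPolynomial σ (AdjoinRoot (f none)) ⧸ spanAevalX (f ∘ some)) :=
  (Ideal.quotientEquivAlg _ _ (optionEquivRight R σ) <| by
    simp only [spanAevalX]
    rw [Ideal.map_coe, Ideal.map_span_range_aeval, Option.range_eq, Ideal.span_insert,
      Ideal.map_span, Set.image_singleton]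
    simp only [optionEquivRight_X_none, Function.comp_def, optionEquivRight_X_some]
    rw [← algebraMap_eq, Polynomial.aeval_algebraMap_apply, Polynomial.aeval_X_left_apply,
      algebraMap_eq]).trans <|
  Ideal.quotientSupAlgEquiv ((Ideal.span {f none}).map C) (spanAevalX (f ∘ some))
    (quotientMapCSpanAlgEquivAdjoinRoot _) _ <| by
    simp only [spanAevalX]
    rw [Ideal.map_span_range_aeval]
    simp only [AlgHom.coe_comp, Function.comp_apply, Ideal.Quotient.mkₐ_eq_mk,
      AlgEquiv.coe_toAlgHom, quotientMapCSpanAlgEquivAdjoinRoot_mk_X]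

noncomputable def quotientSpanAevalXFinSuccEquiv {n : ℕ} (f : Fin (n + 1) → R[X]) :
    (MvPolynomial (Fin (n + 1)) R ⧸ spanAevalX f) ≃ₐ[R]
      (MvPolynomial (Fin n) (AdjoinRoot (f 0)) ⧸ spanAevalX fun i => f i.succ) :=
  (quotientSpanAevalXRenameEquiv f (_root_.finSuccEquiv n)).trans
    (quotientSpanAevalXOptionEquiv _)

theorem nonempty_quotientSpanAevalX_algEquiv_pi {n : ℕ} {A : Type*} [CommRing A] (N : Fin n → ℕ)
    (f : Fin n → A[X]) (hf : ∀ i, (f i).SplitsWithUnitDifferences (N i)) :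
    Nonempty ((MvPolynomial (Fin n) A ⧸ spanAevalX f) ≃ₐ[A] (Fin (∏ i, N i) → A)) := by
  induction n generalizing A with
  | zero =>
    have hbot : spanAevalX (A := A) f = ⊥ := by simp [spanAevalX]
    rw [Fin.prod_univ_zero]
    exact ⟨(Ideal.quotientEquivAlgOfEq A hbot).trans <| (AlgEquiv.quotientBot A _).trans <|
      (isEmptyAlgEquiv A (Fin 0)).trans (AlgEquiv.funUnique A (Fin 1) A).symm⟩
  | succ n ih =>
    obtain ⟨e₀⟩ := (hf 0).nonempty_adjoinRoot_algEquiv_pi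
    obtain ⟨e⟩ := ih (A := Fin (N 0) → A) (N ∘ Fin.succ)
      (fun i => (f i.succ).map (algebraMap A _)) fun i => (hf i.succ).map _
    rw [Fin.prod_univ_succ, mul_comm]
    exact ⟨(quotientSpanAevalXFinSuccEquiv f).trans <|
      (quotientSpanAevalXMapEquiv _ e₀).trans <|
      (Ideal.quotientEquivAlgOfEq A (spanAevalX_eq_spanAevalX_map _)).trans <|
      (e.restrictScalars A).trans <|
      (AlgEquiv.curry A A _ _).symm.trans <|
      AlgEquiv.piCongrLeft' A (fun _ => A) finProdFinEquiv⟩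

end MvPolynomial

/-- with A = F[x_1,…,x_t]/⟨Φ_{p^{c_1}}(x_1),…,Φ_{p^{c_t}}(x_t)⟩
(where c_1 ≥ c_i for all i) and a = F[x]/⟨Φ_{p^{c_1}}⟩, there is an F-algebra
isomorphism A ≃ a^N where N = φ(p^{c_2})⋯φ(p^{c_t}) = dim_F A / dim_F a. -/
theorem multi_cyclotomic_same_prime_equiv_pi
    (F : Type*) [Field F] [CharZero F] (p : ℕ) (hp : p.Prime)
    (t : ℕ) (ht : 0 < t) (c : Fin t → ℕ)
    (hc : ∀ i, c i ≤ c ⟨0, ht⟩) :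
    Nonempty
      ((MvPolynomial (Fin t) F ⧸ cyclotomicIdeal F p t c)
        ≃ₐ[F]
        (Fin (∏ i ∈ Finset.univ.erase (⟨0, ht⟩ : Fin t), (p ^ c i).totient)
          → AdjoinRoot (cyclotomic (p ^ c ⟨0, ht⟩) F))) ∧
    (∏ i ∈ Finset.univ.erase (⟨0, ht⟩ : Fin t), (p ^ c i).totient) =
      Module.finrank F (MvPolynomial (Fin t) F ⧸ cyclotomicIdeal F p t c) /
        Module.finrank F (AdjoinRoot (cyclotomic (p ^ c ⟨0, ht⟩) F)) := by
  obtain ⟨n, rfl⟩ : ∃ n, t = n + 1 := ⟨t - 1, (Nat.succ_pred_eq_of_pos ht).symm⟩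
  set a := AdjoinRoot (cyclotomic (p ^ c 0) F)
  have hsplit (i : Fin n) :
      (cyclotomic (p ^ c i.succ) a).SplitsWithUnitDifferences (p ^ c i.succ).totient :=
    splitsWithUnitDifferences_cyclotomic_adjoinRoot F (pow_pos hp.pos _) (pow_dvd_pow p (hc _))
  obtain ⟨e⟩ := MvPolynomial.nonempty_quotientSpanAevalX_algEquiv_pi _ _ hsplit
  let E : (MvPolynomial (Fin (n + 1)) F ⧸ cyclotomicIdeal F p (n + 1) c) ≃ₐ[F]
      (Fin (∏ i ∈ Finset.univ.erase 0, (p ^ c i).totient) → a) :=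
    (MvPolynomial.quotientSpanAevalXFinSuccEquiv _).trans <|
      (Ideal.quotientEquivAlgOfEq F (by
        rw [MvPolynomial.spanAevalX_eq_spanAevalX_map]
        simp only [map_cyclotomic]
        rfl)).trans <|
      (e.restrictScalars F).trans <|
      AlgEquiv.piCongrLeft' F (fun _ => a)
        (finCongr (Fin.prod_univ_erase_zero fun i => (p ^ c i).totient).symm)
  refine ⟨⟨E⟩, ?_⟩
  have : Module.Finite F a := (cyclotomic.monic _ F).finite_adjoinRoot
  have hdim : Module.finrank F a = (p ^ c 0).totient :=
    finrank_quotient_span_eq_natDegree.trans (natDegree_cyclotomic _ _)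
  rw [E.toLinearEquiv.finrank_eq, Module.finrank_pi_fintype, Finset.sum_const, Finset.card_univ,
    Fintype.card_fin, smul_eq_mul]
  exact (Nat.mul_div_cancel _ (hdim ▸ Nat.totient_pos.mpr (pow_pos hp.pos _))).symm
end

section
/- Let F be a field of characteristic zero, p a prime, and b_1, …, b_t positive integers. Then there exist a positive integer N and nonnegative integers c_1, …, c_N such that the group algebra F[Z/p^{b_1}Z × ⋯ × Z/p^{b_t}Z] is isomorphic as an F-algebra to the product F[z]/⟨Φ_{p^{c_1}}(z)⟩ × ⋯ × F[z]/⟨Φ_{p^{c_N}}(z)⟩. -/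
/-!
By the Chinese remainder theorem, `F[ℤ/p^a] ≅ F[X]/(X^{p^a} - 1) ≅ ∏_{k ≤ a} F[X]/Φ_{p^k}`,
the `Φ_{p^k}` being pairwise coprime in characteristic zero. Since `F[G × H] ≅ F[H] ⊗ F[G]` and
tensor products distribute over finite products, it remains to split
`F[X]/Φ_{p^c} ⊗ F[X]/Φ_{p^d} ≅ (F[X]/Φ_{p^c})[Y]/Φ_{p^d}(Y)` for `d ≤ c`. The primitive
`p^d`-th roots of unity of the field `ℚ(ζ_{p^c})` map into `F[X]/Φ_{p^c}`, where they split
`Φ_{p^d}` into linear factors whose pairwise differences are units, so the CRT gives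
`φ(p^d)` copies of `F[X]/Φ_{p^c}`.
-/

open Polynomial TensorProduct Function

noncomputable section

namespace AdjoinRoot

def prodAlgEquivPi {R S ι : Type*} [CommSemiring R] [CommRing S] [Algebra R S] [Fintype ι]
    (f : ι → S[X]) (hf : Pairwise (IsCoprime on f)) :
    AdjoinRoot (∏ i, f i) ≃ₐ[R] Π i, AdjoinRoot (f i) :=
  .ofRingEquiv
    (f := (Ideal.quotEquivOfEq (Ideal.iInf_span_singleton fun _ _ hij ↦ hf hij).symm).trans
      (Ideal.quotientInfRingEquivPiQuotient _ fun _ _ hij ↦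
        (Ideal.isCoprime_span_singleton_iff _ _).mpr (hf hij)))
    fun _ ↦ rfl

def tensorAlgEquivMap {R T : Type*} [CommRing R] [CommRing T] [Algebra R T] (f : R[X]) :
    T ⊗[R] AdjoinRoot f ≃ₐ[T] AdjoinRoot (f.map (algebraMap R T)) :=
  (tensorAlgEquiv f _ rfl).trans <| mapAlgEquiv (Algebra.TensorProduct.rid R T T) _ _ <| by
    rw [Polynomial.map_map]
    convert Associated.refl _ using 2
    ext
    simp [Algebra.algebraMap_eq_smul_one]

theorem root_X_pow_sub_one_pow {R : Type*} [CommRing R] (n : ℕ) :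
    root (X ^ n - 1 : R[X]) ^ n = 1 := by
  have h := mk_self (f := (X ^ n - 1 : R[X]))
  rwa [map_sub, map_pow, mk_X, map_one, sub_eq_zero] at h

theorem isPrimitiveRoot_root_cyclotomic {K : Type*} [Field K] [CharZero K] {n : ℕ} [NeZero n]
    [Fact (Irreducible (cyclotomic n K))] : IsPrimitiveRoot (root (cyclotomic n K)) n := by
  have := charZero_of_injective_algebraMap (algebraMap K (AdjoinRoot (cyclotomic n K))).injective
  rw [← isRoot_cyclotomic_iff, ← map_cyclotomic n (of (cyclotomic n K))]
  exact isRoot_root _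

end AdjoinRoot

namespace AddMonoidAlgebra

def zmodAlgEquivAdjoinRoot (R : Type*) [CommRing R] (n : ℕ) [NeZero n] :
    AddMonoidAlgebra R (ZMod n) ≃ₐ[R] AdjoinRoot (X ^ n - 1 : R[X]) :=
  have hroot := AdjoinRoot.root_X_pow_sub_one_pow (R := R) n
  .ofAlgHom
    (lift R _ (ZMod n)
      { toFun x := AdjoinRoot.root _ ^ (Multiplicative.toAdd x).val
        map_one' := by simp
        map_mul' x y := by
          rw [toAdd_mul, ZMod.val_add, ← pow_eq_pow_mod _ hroot, pow_add] })
    (AdjoinRoot.liftAlgHom _ (Algebra.ofId R _) (single 1 1) <| by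
      simp [single_pow, one_def])
    (AdjoinRoot.algHom_ext <| by
      simp [ZMod.val_one_eq_one_mod, ← pow_eq_pow_mod _ hroot])
    (algHom_ext (fun x ↦ by simp [single_pow]) (Subsingleton.elim _ _))

end AddMonoidAlgebra

theorem Polynomial.cyclotomic.isCoprime {R : Type*} [CommRing R] [Algebra ℚ R] {n m : ℕ}
    (h : n ≠ m) : IsCoprime (cyclotomic n R) (cyclotomic m R) := by
  simpa only [coe_mapRingHom, map_cyclotomic] using
    (cyclotomic.isCoprime_rat h).map (mapRingHom (algebraMap ℚ R))

theorem Polynomial.prod_cyclotomic_prime_pow_eq_X_pow_sub_one {R : Type*} [CommRing R] {p : ℕ}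
    (hp : p.Prime) (a : ℕ) : ∏ k : Fin (a + 1), cyclotomic (p ^ (k : ℕ)) R = X ^ p ^ a - 1 := by
  rw [← prod_cyclotomic_eq_X_pow_sub_one (pow_pos hp.pos a), Nat.divisors_prime_pow hp,
    Finset.prod_map, Fin.prod_univ_eq_prod_range (fun k ↦ cyclotomic (p ^ k) R)]
  rfl

def IsPrimitiveRoot.adjoinRootCyclotomicAlgEquivPi {K B : Type*} [Field K] [CommRing B] {ζ : K}
    {n : ℕ} (hζ : IsPrimitiveRoot ζ n) (φ : K →+* B) :
    AdjoinRoot (cyclotomic n B) ≃ₐ[B] (primitiveRoots n K → B) :=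
  have hfactor : cyclotomic n B = ∏ μ : primitiveRoots n K, (X - C (φ μ)) := by
    rw [← map_cyclotomic n φ, cyclotomic_eq_prod_X_sub_primitiveRoots hζ, Polynomial.map_prod,
      ← Finset.prod_coe_sort]
    simp
  have hcoprime : Pairwise (IsCoprime on fun μ : primitiveRoots n K ↦ X - C (φ μ)) :=
    fun μ ν hμν ↦ isCoprime_X_sub_C_of_isUnit_sub <| by
      rw [← RingHom.map_sub]
      exact (sub_ne_zero.2 (Subtype.coe_injective.ne hμν)).isUnit.map φ
  (AdjoinRoot.algEquivOfEq B _ _ hfactor).trans <| (AdjoinRoot.prodAlgEquivPi _ hcoprime).trans <|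
    AlgEquiv.piCongrRight fun μ ↦ quotientSpanXSubCAlgEquiv (φ μ)

def AlgEquiv.piCurry (R : Type*) [CommSemiring R] {ι : Type*} {κ : ι → Type*}
    (A : ∀ i, κ i → Type*) [∀ i k, Semiring (A i k)] [∀ i k, Algebra R (A i k)] :
    (Π s : Σ i, κ i, A s.1 s.2) ≃ₐ[R] Π i, Π k, A i k where
  toEquiv := Equiv.piCurry A
  map_mul' _ _ := rfl
  map_add' _ _ := rfl
  commutes' _ := rfl

def IsPiCyclotomic (F : Type*) [CommRing F] (p : ℕ) (A : Type*) [Semiring A] [Algebra F A] :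
    Prop :=
  ∃ (ι : Type) (_ : Fintype ι) (c : ι → ℕ),
    Nonempty (A ≃ₐ[F] Π i, AdjoinRoot (cyclotomic (p ^ c i) F))

namespace IsPiCyclotomic

variable {F : Type*} [CommRing F] {p : ℕ}

theorem of_algEquiv {A B : Type*} [Semiring A] [Algebra F A] [Semiring B] [Algebra F B]
    (e : A ≃ₐ[F] B) (h : IsPiCyclotomic F p B) : IsPiCyclotomic F p A :=
  let ⟨ι, hι, c, ⟨e'⟩⟩ := h
  ⟨ι, hι, c, ⟨e.trans e'⟩⟩

theorem adjoinRoot_cyclotomic (c : ℕ) : IsPiCyclotomic F p (AdjoinRoot (cyclotomic (p ^ c) F)) :=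
  ⟨Unit, inferInstance, fun _ ↦ c, ⟨(AlgEquiv.funUnique F Unit _).symm⟩⟩

theorem self : IsPiCyclotomic F p F :=
  of_algEquiv ((quotientSpanXSubCAlgEquiv 1).symm.trans
    (AdjoinRoot.algEquivOfEq F _ _ (by simp))) (adjoinRoot_cyclotomic 0)

theorem pi {ι : Type} [Fintype ι] {A : ι → Type*} [∀ i, Semiring (A i)] [∀ i, Algebra F (A i)]
    (h : ∀ i, IsPiCyclotomic F p (A i)) : IsPiCyclotomic F p (Π i, A i) := by
  choose κ _ c e using h
  exact ⟨Σ i, κ i, inferInstance, fun s ↦ c s.1 s.2,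
    ⟨(AlgEquiv.piCongrRight fun i ↦ (e i).some).trans (AlgEquiv.piCurry F _).symm⟩⟩

theorem exists_fin {A : Type*} [Semiring A] [Algebra F A] [Nontrivial A]
    (h : IsPiCyclotomic F p A) :
    ∃ N : ℕ, 0 < N ∧ ∃ c : Fin N → ℕ,
      Nonempty (A ≃ₐ[F] Π j : Fin N, AdjoinRoot (cyclotomic (p ^ c j) F)) := by
  obtain ⟨ι, _, c, ⟨e⟩⟩ := h
  have : Nonempty ι := by
    by_contra hι
    have := not_nonempty_iff.mp hι
    exact not_subsingleton A e.injective.subsingleton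
  let σ := Fintype.equivFin ι
  exact ⟨Fintype.card ι, Fintype.card_pos, c ∘ σ.symm,
    ⟨e.trans (AlgEquiv.piCongrLeft' F _ σ)⟩⟩

variable [Algebra ℚ F]

theorem adjoinRoot_cyclotomic_tensorProduct (hp : 0 < p) (c d : ℕ) :
    IsPiCyclotomic F p
      (AdjoinRoot (cyclotomic (p ^ c) F) ⊗[F] AdjoinRoot (cyclotomic (p ^ d) F)) := by
  wlog hdc : d ≤ c generalizing c d
  · exact of_algEquiv (Algebra.TensorProduct.comm ..) (this d c (by omega))
  have : Fact (Irreducible (cyclotomic (p ^ c) ℚ)) :=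
    ⟨cyclotomic.irreducible_rat (pow_pos hp c)⟩
  have : NeZero (p ^ c) := ⟨(pow_pos hp c).ne'⟩
  have hζ : IsPrimitiveRoot (AdjoinRoot.root (cyclotomic (p ^ c) ℚ) ^ p ^ (c - d)) (p ^ d) :=
    AdjoinRoot.isPrimitiveRoot_root_cyclotomic.pow (pow_pos hp c)
      (by rw [← pow_add, Nat.sub_add_cancel hdc])
  let φ := AdjoinRoot.map (algebraMap ℚ F) (cyclotomic (p ^ c) ℚ) (cyclotomic (p ^ c) F)
    (by rw [map_cyclotomic])
  exact ⟨_, inferInstance, fun _ ↦ c, ⟨(((AdjoinRoot.tensorAlgEquivMap _).trans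
    (AdjoinRoot.algEquivOfEq _ _ _ (map_cyclotomic _ _))).trans
      (hζ.adjoinRootCyclotomicAlgEquivPi φ)).restrictScalars F⟩⟩

theorem tensorProduct (hp : 0 < p) {A B : Type*} [Semiring A] [Algebra F A] [Semiring B]
    [Algebra F B] (hA : IsPiCyclotomic F p A) (hB : IsPiCyclotomic F p B) :
    IsPiCyclotomic F p (A ⊗[F] B) := by
  classical
  obtain ⟨ι, _, c, ⟨eA⟩⟩ := hA
  obtain ⟨κ, _, d, ⟨eB⟩⟩ := hB
  refine of_algEquiv ((Algebra.TensorProduct.congr eA eB).trans <|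
    (Algebra.TensorProduct.comm ..).trans <| Algebra.TensorProduct.piRight F F _ _) <|
    pi fun i ↦ of_algEquiv ((Algebra.TensorProduct.comm ..).trans <|
      Algebra.TensorProduct.piRight F F _ _) <|
      pi fun j ↦ adjoinRoot_cyclotomic_tensorProduct hp _ _

theorem addMonoidAlgebra_zmod (hp : p.Prime) (a : ℕ) :
    IsPiCyclotomic F p (AddMonoidAlgebra F (ZMod (p ^ a))) := by
  have : NeZero (p ^ a) := ⟨(pow_pos hp.pos a).ne'⟩
  have hcoprime : Pairwise (IsCoprime on fun k : Fin (a + 1) ↦ cyclotomic (p ^ (k : ℕ)) F) :=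
    fun k l hkl ↦ cyclotomic.isCoprime <|
      (Nat.pow_right_injective hp.two_le).ne (Fin.val_injective.ne hkl)
  have e₁ := AddMonoidAlgebra.zmodAlgEquivAdjoinRoot F (p ^ a)
  have e₂ := AdjoinRoot.algEquivOfEq F _ _
    (prod_cyclotomic_prime_pow_eq_X_pow_sub_one (R := F) hp a).symm
  have e₃ := AdjoinRoot.prodAlgEquivPi (R := F) _ hcoprime
  exact ⟨Fin (a + 1), inferInstance, fun k ↦ k, ⟨(e₁.trans e₂).trans e₃⟩⟩

theorem addMonoidAlgebra_prod (hp : 0 < p) {M N : Type*} [AddCommMonoid M] [AddCommMonoid N]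
    (hM : IsPiCyclotomic F p (AddMonoidAlgebra F M))
    (hN : IsPiCyclotomic F p (AddMonoidAlgebra F N)) :
    IsPiCyclotomic F p (AddMonoidAlgebra F (M × N)) :=
  of_algEquiv ((AddMonoidAlgebra.curryAlgEquiv F).trans <|
    (AddMonoidAlgebra.scalarTensorEquiv F (M := M) (AddMonoidAlgebra F N)).symm.restrictScalars F)
    (tensorProduct hp hN hM)

theorem addMonoidAlgebra_pi_zmod (hp : p.Prime) :
    ∀ {t : ℕ} (b : Fin t → ℕ), IsPiCyclotomic F p (AddMonoidAlgebra F (Π i, ZMod (p ^ b i)))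
  | 0, _ => of_algEquiv (AddMonoidAlgebra.uniqueAlgEquiv F _) self
  | _ + 1, b => of_algEquiv
      (AddMonoidAlgebra.domCongr F F (Fin.consLinearEquiv ℕ fun i ↦ ZMod (p ^ b i)).toAddEquiv.symm)
      (addMonoidAlgebra_prod hp.pos (addMonoidAlgebra_zmod hp _)
        (addMonoidAlgebra_pi_zmod hp fun i ↦ b i.succ))

end IsPiCyclotomic

end

theorem groupAlgebra_pGroup_equiv_pi_cyclotomic_general
    (F : Type*) [Field F] [CharZero F] (p : ℕ) (hp : p.Prime)
    (t : ℕ) (b : Fin t → ℕ) :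
    ∃ N : ℕ, 0 < N ∧ ∃ c : Fin N → ℕ,
      Nonempty
        (AddMonoidAlgebra F ((i : Fin t) → ZMod (p ^ b i)) ≃ₐ[F]
          ((j : Fin N) → AdjoinRoot (cyclotomic (p ^ c j) F))) :=
  (IsPiCyclotomic.addMonoidAlgebra_pi_zmod hp b).exists_fin

/-- the group algebra F[ℤ/p^{b_1}ℤ × ⋯ × ℤ/p^{b_t}ℤ] is
isomorphic as an F-algebra to a finite product of quotients
F[z]/⟨Φ_{p^{c_j}}(z)⟩. -/
theorem groupAlgebra_pGroup_equiv_pi_cyclotomic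
    (F : Type*) [Field F] [CharZero F] (p : ℕ) (hp : p.Prime)
    (t : ℕ) (b : Fin t → ℕ) (hb : ∀ i, 0 < b i) :
    ∃ N : ℕ, 0 < N ∧ ∃ c : Fin N → ℕ,
      Nonempty
        (AddMonoidAlgebra F ((i : Fin t) → ZMod (p ^ b i)) ≃ₐ[F]
          ((j : Fin N) → AdjoinRoot (cyclotomic (p ^ c j) F))) :=
  groupAlgebra_pGroup_equiv_pi_cyclotomic_general F p hp t b
end

section
/- Let α ∈ K, let c : G → F be a family of scalars, and set u := Σ_{g ∈ G} c_g · g(α) ∈ K. Then for every F-linear form ℓ : K → F, the identity (Σ_{g ∈ G} ℓ(g(α))·g) · (Σ_{g ∈ G} c_g·g^{-1}) = Σ_{g ∈ G} ℓ(g(u))·g holds in the group algebra F[G]; that is, s_{α,ℓ} · u' = s_{u,ℓ}, where u' := Σ_{g ∈ G} c_g·g^{-1}. -/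
open Finset

theorem MonoidAlgebra.sum_single_mul_sum_single_inv {R G : Type*} [Semiring R] [Group G]
    [Fintype G] (f c : G → R) :
    (∑ g : G, MonoidAlgebra.single g (f g)) * (∑ h : G, MonoidAlgebra.single h⁻¹ (c h)) =
      ∑ g : G, MonoidAlgebra.single g (∑ h : G, f (g * h) * c h) := by
  calc (∑ g : G, MonoidAlgebra.single g (f g)) * (∑ h : G, MonoidAlgebra.single h⁻¹ (c h))
      = ∑ h : G, ∑ g : G, MonoidAlgebra.single (g * h⁻¹) (f g * c h) := by
        rw [sum_mul_sum, sum_comm]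
        simp only [MonoidAlgebra.single_mul_single]
    _ = ∑ h : G, ∑ g : G, MonoidAlgebra.single g (f (g * h) * c h) := by
        refine sum_congr rfl fun h _ => ?_
        exact (Fintype.sum_equiv (Equiv.mulRight h) _ _ fun g => by simp).symm
    _ = ∑ g : G, MonoidAlgebra.single g (∑ h : G, f (g * h) * c h) := by
        rw [sum_comm]
        exact sum_congr rfl fun g _ => (map_sum (MonoidAlgebra.singleAddHom g) _ _).symm

theorem LinearMap.apply_algEquiv_sum_smul {F K : Type*} [CommSemiring F] [Semiring K]
    [Algebra F K] [Fintype (K ≃ₐ[F] K)] (ℓ : K →ₗ[F] F) (g : K ≃ₐ[F] K) (α : K)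
    (c : (K ≃ₐ[F] K) → F) :
    ℓ (g (∑ h : K ≃ₐ[F] K, c h • h α)) = ∑ h : K ≃ₐ[F] K, ℓ ((g * h) α) * c h := by
  simp only [map_sum, map_smul, smul_eq_mul, mul_comm (c _), AlgEquiv.mul_apply]

theorem projected_orbitSum_mul_eq_general
    (F K : Type*) [Field F] [Field K] [Algebra F K]
    [Fintype (K ≃ₐ[F] K)]
    (α : K) (c : (K ≃ₐ[F] K) → F) (ℓ : K →ₗ[F] F) :
    (∑ g : K ≃ₐ[F] K, MonoidAlgebra.single g (ℓ (g α))) *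
        (∑ g : K ≃ₐ[F] K, MonoidAlgebra.single g⁻¹ (c g)) =
      ∑ g : K ≃ₐ[F] K,
        MonoidAlgebra.single g (ℓ (g (∑ h : K ≃ₐ[F] K, c h • h α))) := by
  simp only [MonoidAlgebra.sum_single_mul_sum_single_inv, ℓ.apply_algEquiv_sum_smul]

/-- for u = Σ_g c_g·g(α), every F-linear form ℓ : K → F
satisfies s_{α,ℓ} · (Σ_g c_g·g⁻¹) = s_{u,ℓ} in the group algebra F[G]. -/
theorem projected_orbitSum_mul_eq
    (F K : Type*) [Field F] [Field K] [CharZero F] [Algebra F K]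
    [FiniteDimensional F K] [IsGalois F K]
    [Fintype (K ≃ₐ[F] K)]
    (α : K) (c : (K ≃ₐ[F] K) → F) (ℓ : K →ₗ[F] F) :
    (∑ g : K ≃ₐ[F] K, MonoidAlgebra.single g (ℓ (g α))) *
        (∑ g : K ≃ₐ[F] K, MonoidAlgebra.single g⁻¹ (c g)) =
      ∑ g : K ≃ₐ[F] K,
        MonoidAlgebra.single g (ℓ (g (∑ h : K ≃ₐ[F] K, c h • h α))) :=
  projected_orbitSum_mul_eq_general F K α c ℓ
end
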